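/- arXiv:2409.14264 — 10 statements merged into one kernel-verified Lean document; each statement's English description precedes it below -/
import Mathlib

section
/- Let q be an odd prime power with q ≡ 3 (mod 4). Let a ∈ F_q and let u, u' be nonzero squares in F_q with u + u' = a^2. Let s, s' ∈ F_q satisfy s^2 = u and s'^2 = u'. Let ε ∈ {1,-1}. Then η(a+s) = η(a-s) = ε if and only if η(a+s') = η(a-s') = η(2)·ε, where η is the quadratic character of F_q. -/
/-- Lemma 2 of the paper. -/
theorem stmt_2 {F : Type*} [Field F] [Fintype F] [DecidableEq F]
    (hodd : Odd (Fintype.card F)) (h4 : Fintype.card F % 4 = 3)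
    (a u u' s s' : F) (hu0 : u ≠ 0) (hu : IsSquare u)
    (hu'0 : u' ≠ 0) (hu' : IsSquare u')
    (hsum : u + u' = a ^ 2) (hs : s ^ 2 = u) (hs' : s' ^ 2 = u')
    (ε : ℤ) (hε : ε = 1 ∨ ε = -1) :
    (quadraticChar F (a + s) = ε ∧ quadraticChar F (a - s) = ε) ↔
      (quadraticChar F (a + s') = quadraticChar F 2 * ε ∧
       quadraticChar F (a - s') = quadraticChar F 2 * ε) := by
  set χ := quadraticChar F with hχdef
  have hchar : ringChar F ≠ 2 := by
    intro h
    have := FiniteField.even_card_iff_char_two.1 h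
    rw [Nat.odd_iff] at hodd
    omega
  have h2 : (2 : F) ≠ 0 := Ring.two_ne_zero hchar
  -- products
  have hprod : (a + s) * (a - s) = u' := by linear_combination -hsum - hs
  have hprod' : (a + s') * (a - s') = u := by linear_combination -hsum - hs'
  have hps : a + s ≠ 0 := fun h => hu'0 (by rw [← hprod, h, zero_mul])
  have hms : a - s ≠ 0 := fun h => hu'0 (by rw [← hprod, h, mul_zero])
  have hps' : a + s' ≠ 0 := fun h => hu0 (by rw [← hprod', h, zero_mul])
  have hms' : a - s' ≠ 0 := fun h => hu0 (by rw [← hprod', h, mul_zero])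
  have hsq : ∀ x : F, x ≠ 0 → χ x * χ x = 1 := fun x hx => by
    have := quadraticChar_sq_one hx
    rwa [pow_two] at this
  have hne : ∀ x : F, x ≠ 0 → χ x ≠ 0 := fun x hx h0 => by
    have := hsq x hx; rw [h0, mul_zero] at this; exact absurd this (by norm_num)
  -- χ(a+s) = χ(a-s) and χ(a+s') = χ(a-s')
  have hu'1 : χ u' = 1 := (quadraticChar_one_iff_isSquare hu'0).2 hu'
  have hu1 : χ u = 1 := (quadraticChar_one_iff_isSquare hu0).2 hu
  have heqs : χ (a - s) = χ (a + s) := by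
    have h1 : χ (a + s) * χ (a - s) = 1 := by rw [← map_mul, hprod, hu'1]
    have h2 := hsq (a + s) hps
    exact mul_left_cancel₀ (hne _ hps) (h1.trans h2.symm)
  have heqs' : χ (a - s') = χ (a + s') := by
    have h1 : χ (a + s') * χ (a - s') = 1 := by rw [← map_mul, hprod', hu1]
    have h2 := hsq (a + s') hps'
    exact mul_left_cancel₀ (hne _ hps') (h1.trans h2.symm)
  -- key: χ 2 * χ(a+s) * χ(a+s') = 1
  have hkey : χ 2 * χ (a + s) * χ (a + s') = 1 := by
    by_cases h : a + s + s' = 0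
    · have hne0 : a + s - s' ≠ 0 := by
        intro h'
        apply hu'0
        have h2s : (2 : F) * s' = 0 := by linear_combination h - h'
        have : s' = 0 := by
          rcases mul_eq_zero.1 h2s with h'' | h''
          · exact absurd h'' h2
          · exact h''
        rw [← hs', this]; ring
      have hid : 2 * ((a + s) * (a - s')) = (a + s - s') ^ 2 := by
        linear_combination -hsum - hs - hs'
      have : χ 2 * (χ (a + s) * χ (a - s')) = 1 := by
        rw [← map_mul, ← map_mul, hid, quadraticChar_sq_one' hne0]
      rw [mul_assoc, ← heqs']; exact this
    · have hid : 2 * ((a + s) * (a + s')) = (a + s + s') ^ 2 := by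
        linear_combination -hsum - hs - hs'
      have : χ 2 * (χ (a + s) * χ (a + s')) = 1 := by
        rw [← map_mul, ← map_mul, hid, quadraticChar_sq_one' h]
      rw [mul_assoc]; exact this
  have h22 : χ 2 * χ 2 = 1 := hsq 2 h2
  have hss : χ (a + s) * χ (a + s) = 1 := hsq (a + s) hps
  have hmain : χ (a + s') = χ 2 * χ (a + s) := by
    linear_combination (χ 2 * χ (a + s)) * hkey -
      (χ (a + s') * (χ (a + s) * χ (a + s))) * h22 - χ (a + s') * hss
  constructor
  · rintro ⟨h1, _⟩
    refine ⟨by rw [hmain, h1], by rw [heqs', hmain, h1]⟩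
  · rintro ⟨h1, _⟩
    have hA : χ (a + s) = ε := by
      have : χ 2 * χ (a + s) = χ 2 * ε := by rw [← hmain, h1]
      exact mul_left_cancel₀ (hne 2 h2) this
    exact ⟨hA, heqs.trans hA⟩
end

section
/- Let R be an integral domain and A, B ∈ R. If neither A^2 - 4B nor B is a square in R, then the polynomial x^4 + A x^2 + B is irreducible in R[x]. -/
open Polynomial

/-- If neither `A^2 - 4B` nor `B` is a square in an integral
domain `R`, then `x^4 + A x^2 + B` cannot be factored as a product of two
polynomials of strictly smaller positive degree. -/
theorem stmt_3 {R : Type*} [CommRing R] [IsDomain R] (A B : R)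
    (hAB : ¬ IsSquare (A ^ 2 - 4 * B)) (hB : ¬ IsSquare B) :
    ¬ ∃ g h : R[X], (X ^ 4 + C A * X ^ 2 + C B : R[X]) = g * h ∧
      0 < g.natDegree ∧ g.natDegree < 4 ∧ 0 < h.natDegree ∧ h.natDegree < 4 := by
  rintro ⟨g, h, heq, hg0, hg4, hh0, hh4⟩
  have key : ∀ r : R, r ^ 4 + A * r ^ 2 + B = 0 → False := fun r hr =>
    hAB ⟨2 * r ^ 2 + A, by linear_combination (-4 : R) * hr⟩
  have hgne : g ≠ 0 := fun h' => by simp [h'] at hg0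
  have hhne : h ≠ 0 := fun h' => by simp [h'] at hh0
  have hdeg : g.natDegree + h.natDegree = 4 := by
    have h4 : (X ^ 4 + C A * X ^ 2 + C B : R[X]).natDegree = 4 := by compute_degree!
    rw [← natDegree_mul hgne hhne, ← heq, h4]
  have hmon : (X ^ 4 + C A * X ^ 2 + C B : R[X]).Monic := by monicity!
  have hlead : g.leadingCoeff * h.leadingCoeff = 1 := by
    have h1 := hmon
    rw [heq, Monic, leadingCoeff_mul] at h1
    exact h1
  -- linear factor case
  have lin : ∀ p q : R[X], (X ^ 4 + C A * X ^ 2 + C B : R[X]) = p * q →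
      p.natDegree = 1 → p.leadingCoeff * q.leadingCoeff = 1 → False := by
    intro p q hpq hp1 hl
    have hev : p.eval (-(p.coeff 0) * q.leadingCoeff) = 0 := by
      rw [eval_eq_sum_range, hp1]
      have hc1 : p.coeff 1 = p.leadingCoeff := by rw [leadingCoeff, hp1]
      simp only [Finset.sum_range_succ, Finset.sum_range_zero, pow_zero, pow_one, hc1]
      linear_combination (-(p.coeff 0)) * hl
    have hPr := congrArg (eval (-(p.coeff 0) * q.leadingCoeff)) hpq
    simp only [eval_mul, hev, zero_mul, eval_add, eval_pow, eval_X, eval_C] at hPr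
    exact key _ hPr
  have hcases : g.natDegree = 1 ∨ g.natDegree = 2 ∨ h.natDegree = 1 := by omega
  rcases hcases with h1 | h2 | h1
  · exact lin g h heq h1 hlead
  · have hh2 : h.natDegree = 2 := by omega
    have hg3 : g.coeff 3 = 0 := coeff_eq_zero_of_natDegree_lt (by omega)
    have hh3 : h.coeff 3 = 0 := coeff_eq_zero_of_natDegree_lt (by omega)
    have had : g.coeff 2 * h.coeff 2 = 1 := by
      rwa [leadingCoeff, leadingCoeff, h2, hh2] at hlead
    have e3 := congrArg (fun p => Polynomial.coeff p 3) heq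
    have e2 := congrArg (fun p => Polynomial.coeff p 2) heq
    have e1 := congrArg (fun p => Polynomial.coeff p 1) heq
    have e0 := congrArg (fun p => Polynomial.coeff p 0) heq
    simp only [coeff_mul] at e3 e2 e1 e0
    rw [Finset.Nat.sum_antidiagonal_eq_sum_range_succ_mk] at e3 e2 e1 e0
    simp [Finset.sum_range_succ, coeff_X_pow, coeff_C, hg3, hh3] at e3 e2 e1 e0
    set a := g.coeff 2; set b := g.coeff 1; set c := g.coeff 0
    set d := h.coeff 2; set e := h.coeff 1; set f := h.coeff 0
    have hmix : (b * d) * (f * a - c * d) = 0 := by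
      linear_combination (-(a * d)) * e1 + c * d * e3
    have hdne : d ≠ 0 := fun hd => one_ne_zero (by rw [← had, hd, mul_zero])
    have hane : a ≠ 0 := fun ha => one_ne_zero (by rw [← had, ha, zero_mul])
    rcases mul_eq_zero.mp hmix with hbd | hfc
    · have hb : b = 0 := by
        rcases mul_eq_zero.mp hbd with h' | h'
        · exact h'
        · exact absurd h' hdne
      have he : e = 0 := by
        have : a * e = 0 := by linear_combination -e3 - d * hb
        rcases mul_eq_zero.mp this with h' | h'
        · exact absurd h' hane
        · exact h'
      have hA' : A = c * d + a * f := by linear_combination e2 + e * hb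
      exact hAB ⟨c * d - a * f, by
        linear_combination (A + c * d + a * f) * hA' - 4 * e0 + 4 * c * f * had⟩
    · exact hB ⟨c * d, by linear_combination e0 - c * f * had + c * d * hfc⟩
  · exact lin h g (by rw [heq, mul_comm]) h1 (by rw [mul_comm]; exact hlead)
end

section
/- Let q be an odd prime power with q ≡ 3 (mod 4) and let η be the quadratic character of F_q. Then the sum over x ∈ F_q of η(x^4 - 1) equals -1. -/
private lemma sum_sq_aux {F : Type*} [Field F] [Fintype F] [DecidableEq F]
    (hF : ringChar F ≠ 2) (g : F → ℤ) :
    ∑ x : F, g (x ^ 2) = ∑ y : F, (quadraticChar F y + 1) * g y := by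
  rw [← Finset.sum_fiberwise_of_maps_to (fun x _ => Finset.mem_univ (x ^ 2 : F))
    (fun x => g (x ^ 2))]
  refine Finset.sum_congr rfl fun y _ => ?_
  have h1 : ∀ x ∈ Finset.univ.filter (fun x : F => x ^ 2 = y), g (x ^ 2) = g y := by
    intro x hx; rw [(Finset.mem_filter.mp hx).2]
  rw [Finset.sum_congr rfl h1, Finset.sum_const, nsmul_eq_mul]
  have h2 := quadraticChar_card_sqrts hF y
  rw [Set.toFinset_setOf] at h2
  congr 1

/-- If `q ≡ 3 (mod 4)`, then `∑ x, η(x^4 - 1) = -1`. -/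
theorem stmt_5 {F : Type*} [Field F] [Fintype F] [DecidableEq F]
    (hodd : Odd (Fintype.card F)) (h4 : Fintype.card F % 4 = 3) :
    ∑ x : F, quadraticChar F (x ^ 4 - 1) = -1 := by
  set η := quadraticChar F with hη
  have hF : ringChar F ≠ 2 := by
    intro h
    have := FiniteField.even_card_of_char_two h
    rw [Nat.odd_iff] at hodd
    omega
  have hm1 : η (-1) = -1 := by
    rw [hη, quadraticChar_neg_one hF]
    exact ZMod.χ₄_nat_three_mod_four h4
  -- shifted sums vanish
  have hshift : ∀ c : F, ∑ z : F, η (z - c) = 0 := by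
    intro c
    rw [← quadraticChar_sum_zero hF]
    exact Fintype.sum_equiv (Equiv.subRight c) _ _ fun z => rfl
  -- key pointwise identity
  have key : ∀ z : F, z ≠ 0 → η z * η (z - 1) = η (1 - z⁻¹) := by
    intro z hz
    rw [← map_mul]
    have : z * (z - 1) = z ^ 2 * (1 - z⁻¹) := by field_simp
    rw [this, map_mul, hη, quadraticChar_sq_one' hz, one_mul]
  -- T1 : ∑ η z η (z-1) = -1
  have T1 : ∑ z : F, η z * η (z - 1) = -1 := by
    have e0 : ∑ z : F, η z * η (z - 1)
        = ∑ z ∈ Finset.univ.erase (0 : F), η z * η (z - 1) :=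
      (Finset.sum_erase _ (by simp [hη])).symm
    have e1 : ∑ z ∈ Finset.univ.erase (0 : F), η z * η (z - 1)
        = ∑ z ∈ Finset.univ.erase (0 : F), η (1 - z⁻¹) :=
      Finset.sum_congr rfl fun z hz => key z (Finset.ne_of_mem_erase hz)
    have e2 : ∑ z ∈ Finset.univ.erase (0 : F), η (1 - z⁻¹)
        = ∑ w ∈ Finset.univ.erase (0 : F), η (1 - w) := by
      refine Finset.sum_nbij' (fun z => z⁻¹) (fun w => w⁻¹) ?_ ?_ ?_ ?_ ?_
      · intro z hz
        simp only [Finset.mem_erase, Finset.mem_univ, and_true] at hz ⊢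
        exact inv_ne_zero hz
      · intro w hw
        simp only [Finset.mem_erase, Finset.mem_univ, and_true] at hw ⊢
        exact inv_ne_zero hw
      · intro z _; exact inv_inv z
      · intro w _; exact inv_inv w
      · intro z _; rfl
    have e3 : ∑ w ∈ Finset.univ.erase (0 : F), η (1 - w) = -1 := by
      have := Finset.sum_erase_add Finset.univ (fun w : F => η (1 - w))
        (Finset.mem_univ (0 : F))
      have h0 : ∑ w : F, η (1 - w) = 0 := by
        rw [← quadraticChar_sum_zero hF]
        exact Fintype.sum_equiv (Equiv.subLeft 1) _ _ fun z => rfl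
      simp only [sub_zero, h0] at this
      have hone : η 1 = 1 := by simp [hη]
      linarith [this, hone]
    rw [e0, e1, e2, e3]
  -- T3 : odd sum vanishes
  have T3 : ∑ y : F, η y * η (y ^ 2 - 1) = 0 := by
    have hneg : ∑ y : F, η y * η (y ^ 2 - 1)
        = ∑ y : F, η (-y) * η ((-y) ^ 2 - 1) :=
      Fintype.sum_equiv (Equiv.neg F) _ _ fun y => by simp
    have : ∀ y : F, η (-y) * η ((-y) ^ 2 - 1) = -(η y * η (y ^ 2 - 1)) := by
      intro y
      have : (-y : F) = -1 * y := by ring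
      rw [neg_sq, this, map_mul, hm1]
      ring
    rw [Finset.sum_congr rfl fun y _ => this y, Finset.sum_neg_distrib] at hneg
    linarith
  -- S2 : ∑ η (y² - 1) = -1
  have S2 : ∑ y : F, η (y ^ 2 - 1) = -1 := by
    rw [sum_sq_aux hF (fun y => η (y - 1))]
    have : ∀ y : F, (η y + 1) * η (y - 1) = η y * η (y - 1) + η (y - 1) := by
      intro y; ring
    rw [Finset.sum_congr rfl fun y _ => this y, Finset.sum_add_distrib, T1, hshift 1]
    norm_num
  -- assemble
  have main : ∑ x : F, η ((x ^ 2) ^ 2 - 1) = -1 := by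
    rw [sum_sq_aux hF (fun y => η (y ^ 2 - 1))]
    have : ∀ y : F, (η y + 1) * η (y ^ 2 - 1) = η y * η (y ^ 2 - 1) + η (y ^ 2 - 1) := by
      intro y; ring
    rw [Finset.sum_congr rfl fun y _ => this y, Finset.sum_add_distrib, T3, S2]
    norm_num
  calc ∑ x : F, η (x ^ 4 - 1) = ∑ x : F, η ((x ^ 2) ^ 2 - 1) := by
        refine Finset.sum_congr rfl fun x _ => ?_
        ring_nf
    _ = -1 := main
end

section
/- Let q be an odd prime power with q ≡ 3 (mod 4), η the quadratic character of F_q, u ∈ F_q, r a positive integer, and define F_{r,u}(x) = x^r(1 + u·η(x)) on F_q. For a ∈ F_q^* and b ∈ F_q, let δ_{F}(a,b) = #{x ∈ F_q : F(x+a) - F(x) = b}. Then δ_{F_{r,-u}}(a,b) = δ_{F_{r,u}}(a, (-1)^{r+1}·b) for all a ∈ F_q^* and b ∈ F_q. -/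
/-- Lemma 12 of the paper: with `F_{r,u}(x) = x^r (1 + u η(x))`,
`δ_{F_{r,-u}}(a,b) = δ_{F_{r,u}}(a, (-1)^{r+1} b)`. -/
theorem stmt_8 {F : Type*} [Field F] [Fintype F] [DecidableEq F]
    (hodd : Odd (Fintype.card F)) (h4 : Fintype.card F % 4 = 3)
    (r : ℕ) (hr : 0 < r) (u : F) (a b : F) (ha : a ≠ 0) :
    {x : F | (x + a) ^ r * (1 + (-u) * ((quadraticChar F (x + a) : ℤ) : F))
              - x ^ r * (1 + (-u) * ((quadraticChar F x : ℤ) : F)) = b}.ncard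
      = {x : F | (x + a) ^ r * (1 + u * ((quadraticChar F (x + a) : ℤ) : F))
              - x ^ r * (1 + u * ((quadraticChar F x : ℤ) : F))
              = (-1 : F) ^ (r + 1) * b}.ncard := by
  have hm1 : quadraticChar F (-1) = -1 := by
    rw [quadraticChar_neg_one_iff_not_isSquare, FiniteField.isSquare_neg_one_iff, h4]
    simp
  have hneg : ∀ z : F, ((quadraticChar F (-z) : ℤ) : F)
      = -((quadraticChar F z : ℤ) : F) := by
    intro z
    rw [show (-z : F) = -1 * z by ring, map_mul, hm1]
    push_cast
    ring
  set f : F → F := fun x => -x - a with hf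
  have hinv : Function.Involutive f := by
    intro x; simp [hf]
  have hkey : ∀ x : F,
      (f x + a) ^ r * (1 + u * ((quadraticChar F (f x + a) : ℤ) : F))
        - (f x) ^ r * (1 + u * ((quadraticChar F (f x) : ℤ) : F))
      = (-1 : F) ^ (r + 1) *
        ((x + a) ^ r * (1 + (-u) * ((quadraticChar F (x + a) : ℤ) : F))
          - x ^ r * (1 + (-u) * ((quadraticChar F x : ℤ) : F))) := by
    intro x
    have h1 : f x + a = -x := by simp only [hf]; ring
    have h2 : f x = -(x + a) := by simp only [hf]; ring
    rw [h1, h2, hneg, hneg, neg_pow x r, neg_pow (x + a) r, pow_succ]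
    ring
  have hset : {x : F | (x + a) ^ r * (1 + (-u) * ((quadraticChar F (x + a) : ℤ) : F))
              - x ^ r * (1 + (-u) * ((quadraticChar F x : ℤ) : F)) = b}
      = f ⁻¹' {x : F | (x + a) ^ r * (1 + u * ((quadraticChar F (x + a) : ℤ) : F))
              - x ^ r * (1 + u * ((quadraticChar F x : ℤ) : F))
              = (-1 : F) ^ (r + 1) * b} := by
    ext x
    simp only [Set.mem_setOf_eq, Set.mem_preimage, hkey x]
    constructor
    · intro h; rw [h]
    · intro h
      have hne : ((-1 : F) ^ (r + 1)) ≠ 0 := by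
        simp
      exact mul_left_cancel₀ hne h
  rw [hset, ← Set.image_eq_preimage_of_inverse hinv.leftInverse hinv.rightInverse,
    Set.ncard_image_of_injective _ hinv.injective]
end

section
/- Let q be an odd prime power with q ≡ 3 (mod 4), η the quadratic character of F_q, u ∈ F_q, r a positive integer, and F_{r,u}(x) = x^r(1 + u·η(x)). For a ∈ F_q^* and b ∈ F_q: if η(a) = 1 then δ_{F_{r,u}}(a,b) = δ_{F_{r,u}}(1, b/a^r), and if η(a) = -1 then δ_{F_{r,u}}(a,b) = δ_{F_{r,u}}(1, b/((-1)^{r+1} a^r)). Consequently, the differential uniformity of F_{r,u} equals max over b ∈ F_q of δ_{F_{r,u}}(1,b). -/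
/-- Lemma 13 of the paper: reduction of `δ_{F_{r,u}}(a,b)` to
`a = 1`, and the resulting formula for the differential uniformity. -/
theorem stmt_9 {F : Type*} [Field F] [Fintype F] [DecidableEq F]
    (hodd : Odd (Fintype.card F)) (h4 : Fintype.card F % 4 = 3)
    (r : ℕ) (hr : 0 < r) (u : F) :
    (∀ a b : F, a ≠ 0 → quadraticChar F a = 1 →
      {x : F | (x + a) ^ r * (1 + u * ((quadraticChar F (x + a) : ℤ) : F))
              - x ^ r * (1 + u * ((quadraticChar F x : ℤ) : F)) = b}.ncard
        = {x : F | (x + 1) ^ r * (1 + u * ((quadraticChar F (x + 1) : ℤ) : F))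
              - x ^ r * (1 + u * ((quadraticChar F x : ℤ) : F)) = b / a ^ r}.ncard) ∧
    (∀ a b : F, a ≠ 0 → quadraticChar F a = -1 →
      {x : F | (x + a) ^ r * (1 + u * ((quadraticChar F (x + a) : ℤ) : F))
              - x ^ r * (1 + u * ((quadraticChar F x : ℤ) : F)) = b}.ncard
        = {x : F | (x + 1) ^ r * (1 + u * ((quadraticChar F (x + 1) : ℤ) : F))
              - x ^ r * (1 + u * ((quadraticChar F x : ℤ) : F))
              = b / ((-1 : F) ^ (r + 1) * a ^ r)}.ncard) ∧
    (Finset.univ.sup (fun p : F × F =>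
        if p.1 ≠ 0 then
          {x : F | (x + p.1) ^ r * (1 + u * ((quadraticChar F (x + p.1) : ℤ) : F))
              - x ^ r * (1 + u * ((quadraticChar F x : ℤ) : F)) = p.2}.ncard
        else 0)
      = Finset.univ.sup (fun b : F =>
          {x : F | (x + 1) ^ r * (1 + u * ((quadraticChar F (x + 1) : ℤ) : F))
              - x ^ r * (1 + u * ((quadraticChar F x : ℤ) : F)) = b}.ncard)) := by
  classical
  set G : F → F := fun t => t ^ r * (1 + u * ((quadraticChar F t : ℤ) : F)) with hG
  have hGmul : ∀ c t : F, quadraticChar F c = 1 → G (c * t) = c ^ r * G t := by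
    intro c t hc
    simp only [hG, map_mul, hc, one_mul, mul_pow]
    ring
  have hm1 : quadraticChar F (-1 : F) = -1 := by
    rw [quadraticChar_neg_one_iff_not_isSquare, FiniteField.isSquare_neg_one_iff]
    simp [h4]
  -- part 1
  have part1 : ∀ a b : F, a ≠ 0 → quadraticChar F a = 1 →
      {x : F | G (x + a) - G x = b}.ncard = {x : F | G (x + 1) - G x = b / a ^ r}.ncard := by
    intro a b ha ha1
    have hpow : a ^ r ≠ 0 := pow_ne_zero r ha
    have hpt : ∀ y : F, G (a * y + a) - G (a * y) = b ↔ G (y + 1) - G y = b / a ^ r := by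
      intro y
      have h1 : a * y + a = a * (y + 1) := by ring
      rw [h1, hGmul a _ ha1, hGmul a _ ha1, ← mul_sub, eq_div_iff hpow, mul_comm]
    have himg : {x : F | G (x + a) - G x = b}
        = (fun y => a * y) '' {y : F | G (y + 1) - G y = b / a ^ r} := by
      ext x
      constructor
      · intro hx
        refine ⟨a⁻¹ * x, ?_, by field_simp⟩
        have hax : a * (a⁻¹ * x) = x := by field_simp
        have := (hpt (a⁻¹ * x)).mp (by rw [hax]; exact hx)
        exact this
      · rintro ⟨y, hy, rfl⟩
        exact (hpt y).mpr hy
    rw [himg, Set.ncard_image_of_injective _ (mul_right_injective₀ ha)]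
  -- part 2
  have part2 : ∀ a b : F, a ≠ 0 → quadraticChar F a = -1 →
      {x : F | G (x + a) - G x = b}.ncard
        = {x : F | G (x + 1) - G x = b / ((-1 : F) ^ (r + 1) * a ^ r)}.ncard := by
    intro a b ha ha1
    have hna : quadraticChar F (-a) = 1 := by
      have : (-a : F) = (-1) * a := by ring
      rw [this, map_mul, hm1, ha1]; ring
    have hden : ((-1 : F) ^ (r + 1) * a ^ r) ≠ 0 := by
      apply mul_ne_zero
      · exact pow_ne_zero _ (by norm_num)
      · exact pow_ne_zero r ha
    have hkey : (-1 : F) ^ (r + 1) * a ^ r = -((-a) ^ r) := by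
      rw [neg_pow]; ring
    have hpt : ∀ y : F, G ((-a) * (y + 1) + a) - G ((-a) * (y + 1)) = b
        ↔ G (y + 1) - G y = b / ((-1 : F) ^ (r + 1) * a ^ r) := by
      intro y
      have h1 : (-a) * (y + 1) + a = (-a) * y := by ring
      rw [h1, hGmul (-a) _ hna, hGmul (-a) _ hna, eq_div_iff hden, hkey]
      constructor <;> intro h <;> linear_combination h
    have himg : {x : F | G (x + a) - G x = b}
        = (fun y => (-a) * (y + 1)) '' {y : F | G (y + 1) - G y = b / ((-1 : F) ^ (r + 1) * a ^ r)} := by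
      ext x
      constructor
      · intro hx
        refine ⟨(-a)⁻¹ * x - 1, ?_, by field_simp; ring⟩
        have hax : (-a) * (((-a)⁻¹ * x - 1) + 1) = x := by field_simp; ring
        exact (hpt _).mp (by rw [hax]; exact hx)
      · rintro ⟨y, hy, rfl⟩
        exact (hpt y).mpr hy
    have hinj : Function.Injective (fun y : F => (-a) * (y + 1)) := by
      intro y1 y2 h
      have hna0 : (-a : F) ≠ 0 := neg_ne_zero.mpr ha
      simpa using mul_left_cancel₀ hna0 h
    rw [himg, Set.ncard_image_of_injective _ hinj]
  refine ⟨part1, part2, ?_⟩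
  apply le_antisymm
  · apply Finset.sup_le
    intro p _
    by_cases hp : p.1 ≠ 0
    · rw [if_pos hp]
      rcases quadraticChar_dichotomy hp with h1 | h1
      · rw [part1 p.1 p.2 hp h1]
        exact Finset.le_sup (f := fun b : F => {x : F | G (x + 1) - G x = b}.ncard) (Finset.mem_univ (p.2 / p.1 ^ r))
      · rw [part2 p.1 p.2 hp h1]
        exact Finset.le_sup (f := fun b : F => {x : F | G (x + 1) - G x = b}.ncard) (Finset.mem_univ (p.2 / ((-1 : F) ^ (r + 1) * p.1 ^ r)))
    · rw [if_neg hp]; exact Nat.zero_le _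
  · apply Finset.sup_le
    intro b _
    have h1 : (1 : F) ≠ 0 := one_ne_zero
    have := Finset.le_sup (f := fun p : F × F =>
        if p.1 ≠ 0 then {x : F | G (x + p.1) - G x = p.2}.ncard else 0)
      (Finset.mem_univ ((1 : F), b))
    simpa [h1, hG] using this
end

section
/- Let q be an odd prime power with q ≡ 3 (mod 4), η the quadratic character of F_q, and u ∈ F_q with u ∉ {0, 1, -1}. Define F_{2,u}(x) = x^2(1 + u·η(x)). Then the differential uniformity of F_{2,u} is at most 5, i.e., for every a ∈ F_q^* and b ∈ F_q, the equation F_{2,u}(x+a) - F_{2,u}(x) = b has at most 5 solutions x ∈ F_q. -/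
section aux

variable {K : Type*} [Field K]

lemma quad_cases {α β γ r x : K} (hα : α ≠ 0)
    (hr : α * r ^ 2 + β * r + γ = 0) (hx : α * x ^ 2 + β * x + γ = 0) :
    x = r ∨ x = -β / α - r := by
  have h : (x - r) * (α * (x + r) + β) = 0 := by linear_combination hx - hr
  rcases mul_eq_zero.mp h with h | h
  · exact Or.inl (sub_eq_zero.mp h)
  · right
    field_simp
    linear_combination h

lemma quad_vieta {α β γ r s : K} (hα : α ≠ 0) (hrs : r ≠ s)
    (hr : α * r ^ 2 + β * r + γ = 0) (hs : α * s ^ 2 + β * s + γ = 0) :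
    β = -(α * (r + s)) ∧ γ = α * (r * s) := by
  have h : (r - s) * (α * (r + s) + β) = 0 := by linear_combination hr - hs
  have h2 : α * (r + s) + β = 0 := by
    rcases mul_eq_zero.mp h with h | h
    · exact absurd (sub_eq_zero.mp h) hrs
    · exact h
  refine ⟨by linear_combination h2, by linear_combination hr - r * h2⟩

lemma quad_ncard_le_two {T : Set K} {α β γ : K} (hα : α ≠ 0) (hT : T.Finite)
    (h : ∀ x ∈ T, α * x ^ 2 + β * x + γ = 0) : T.ncard ≤ 2 := by
  rcases T.eq_empty_or_nonempty with h0 | ⟨r, hr⟩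
  · simp [h0]
  · have hsub : T ⊆ {r, -β / α - r} := by
      intro x hx
      rcases quad_cases hα (h r hr) (h x hx) with h' | h' <;> simp [h']
    refine le_trans (Set.ncard_le_ncard hsub (by
      exact (Set.finite_singleton _).insert _)) ?_
    refine le_trans (Set.ncard_insert_le _ _) ?_
    simp [Set.ncard_singleton]

end aux

/-- for `u ∉ {0, ±1}`, the differential uniformity of
`F_{2,u}(x) = x^2 (1 + u η(x))` is at most `5`. -/
theorem stmt_11 {F : Type*} [Field F] [Fintype F] [DecidableEq F]
    (hodd : Odd (Fintype.card F)) (h4 : Fintype.card F % 4 = 3)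
    (u : F) (hu : u ∉ ({0, 1, -1} : Set F)) :
    ∀ a b : F, a ≠ 0 →
      {x : F | (x + a) ^ 2 * (1 + u * ((quadraticChar F (x + a) : ℤ) : F))
          - x ^ 2 * (1 + u * ((quadraticChar F x : ℤ) : F)) = b}.ncard ≤ 5 := by
  -- basic facts
  simp only [Set.mem_insert_iff, Set.mem_singleton_iff, not_or] at hu
  obtain ⟨hu0, hu1, hum1⟩ := hu
  have hchar2 : ringChar F ≠ 2 := by
    intro h
    have h2 := FiniteField.even_card_of_char_two h
    have h1 := Nat.odd_iff.mp hodd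
    omega
  have h2F : (2 : F) ≠ 0 := Ring.two_ne_zero hchar2
  have h1p : (1 : F) + u ≠ 0 := fun h => hum1 (by linear_combination h)
  have h1m : (1 : F) - u ≠ 0 := fun h => hu1 (by linear_combination -h)
  have h2u : (2 : F) * u ≠ 0 := mul_ne_zero h2F hu0
  have hχm1 : quadraticChar F (-1 : F) = -1 := by
    rw [quadraticChar_neg_one_iff_not_isSquare, FiniteField.isSquare_neg_one_iff]
    simp [h4]
  have hχneg : ∀ x : F, quadraticChar F (-x) = - quadraticChar F x := by
    intro x
    rw [show -x = -1 * x by ring, map_mul, hχm1]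
    ring
  have hle1 : ∀ T : Set F, (∀ x ∈ T, ∀ y ∈ T, x = y) → T.ncard ≤ 1 :=
    fun T h => (Set.ncard_le_one T.toFinite).mpr h
  have hle0 : ∀ T : Set F, (∀ x, x ∉ T) → T.ncard = 0 := fun T h => by
    rw [Set.eq_empty_iff_forall_notMem.mpr h, Set.ncard_empty]
  intro a b ha
  set S : Set F := {x : F | (x + a) ^ 2 * (1 + u * ((quadraticChar F (x + a) : ℤ) : F))
          - x ^ 2 * (1 + u * ((quadraticChar F x : ℤ) : F)) = b} with hSdef
  set S0 : Set F := {x : F | x ∈ S ∧ (x = 0 ∨ x = -a)} with hS0def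
  set Spp : Set F := {x : F | x ∈ S ∧ quadraticChar F (x + a) = 1 ∧ quadraticChar F x = 1}
    with hSppdef
  set Smm : Set F := {x : F | x ∈ S ∧ quadraticChar F (x + a) = -1 ∧ quadraticChar F x = -1}
    with hSmmdef
  set Spm : Set F := {x : F | x ∈ S ∧ quadraticChar F (x + a) = 1 ∧ quadraticChar F x = -1}
    with hSpmdef
  set Smp : Set F := {x : F | x ∈ S ∧ quadraticChar F (x + a) = -1 ∧ quadraticChar F x = 1}
    with hSmpdef
  -- membership equations
  have hppEq : ∀ x ∈ Spp, 2 * a * (1 + u) * x = b - a ^ 2 * (1 + u) := by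
    rintro x ⟨hxS, h1, h2⟩
    have he : (x + a) ^ 2 * (1 + u * ((quadraticChar F (x + a) : ℤ) : F))
        - x ^ 2 * (1 + u * ((quadraticChar F x : ℤ) : F)) = b := hxS
    rw [h1, h2] at he
    push_cast at he
    linear_combination he
  have hmmEq : ∀ x ∈ Smm, 2 * a * (1 - u) * x = b - a ^ 2 * (1 - u) := by
    rintro x ⟨hxS, h1, h2⟩
    have he : (x + a) ^ 2 * (1 + u * ((quadraticChar F (x + a) : ℤ) : F))
        - x ^ 2 * (1 + u * ((quadraticChar F x : ℤ) : F)) = b := hxS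
    rw [h1, h2] at he
    push_cast at he
    linear_combination he
  have hpmEq : ∀ x ∈ Spm, 2 * u * x ^ 2 + 2 * a * (1 + u) * x + (a ^ 2 * (1 + u) - b) = 0 := by
    rintro x ⟨hxS, h1, h2⟩
    have he : (x + a) ^ 2 * (1 + u * ((quadraticChar F (x + a) : ℤ) : F))
        - x ^ 2 * (1 + u * ((quadraticChar F x : ℤ) : F)) = b := hxS
    rw [h1, h2] at he
    push_cast at he
    linear_combination he
  have hmpEq : ∀ x ∈ Smp, -(2 * u) * x ^ 2 + 2 * a * (1 - u) * x + (a ^ 2 * (1 - u) - b) = 0 := by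
    rintro x ⟨hxS, h1, h2⟩
    have he : (x + a) ^ 2 * (1 + u * ((quadraticChar F (x + a) : ℤ) : F))
        - x ^ 2 * (1 + u * ((quadraticChar F x : ℤ) : F)) = b := hxS
    rw [h1, h2] at he
    push_cast at he
    linear_combination he
  -- nonvanishing from character values
  have hne0of1 : ∀ x : F, quadraticChar F x = 1 → x ≠ 0 := by
    intro x h hx
    rw [hx, quadraticChar_zero] at h
    omega
  have hne0ofm1 : ∀ x : F, quadraticChar F x = -1 → x ≠ 0 := by
    intro x h hx
    rw [hx, quadraticChar_zero] at h
    omega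
  -- values at the boundary points
  have hzeroMem : (0 : F) ∈ S → a ^ 2 * (1 + u * ((quadraticChar F a : ℤ) : F)) = b := by
    intro h
    have he : (0 + a) ^ 2 * (1 + u * ((quadraticChar F (0 + a) : ℤ) : F))
        - (0 : F) ^ 2 * (1 + u * ((quadraticChar F (0 : F) : ℤ) : F)) = b := h
    rw [zero_add] at he
    linear_combination he
  have hnegMem : (-a : F) ∈ S → -(a ^ 2 * (1 - u * ((quadraticChar F a : ℤ) : F))) = b := by
    intro h
    have he : (-a + a) ^ 2 * (1 + u * ((quadraticChar F (-a + a) : ℤ) : F))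
        - (-a : F) ^ 2 * (1 + u * ((quadraticChar F (-a : F) : ℤ) : F)) = b := h
    rw [neg_add_cancel, hχneg] at he
    push_cast at he
    linear_combination he
  -- the boundary class has at most one element
  have hb0 : S0.ncard ≤ 1 := by
    apply hle1
    have hnotboth : ¬(((0 : F) ∈ S) ∧ ((-a : F) ∈ S)) := by
      rintro ⟨h0, hn⟩
      have e0 := hzeroMem h0
      have e1 := hnegMem hn
      have : (2 : F) * a ^ 2 = 0 := by linear_combination e0 - e1
      exact mul_ne_zero h2F (pow_ne_zero 2 ha) this
    rintro x ⟨hxS, hx⟩ y ⟨hyS, hy⟩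
    rcases hx with rfl | rfl <;> rcases hy with rfl | rfl
    · rfl
    · exact absurd ⟨hxS, hyS⟩ hnotboth
    · exact absurd ⟨hyS, hxS⟩ hnotboth
    · rfl
  -- generic bounds
  have hbpp : Spp.ncard ≤ 1 := by
    apply hle1
    intro x hx y hy
    have h1 := hppEq x hx
    have h2 := hppEq y hy
    have hd : 2 * a * (1 + u) ≠ 0 := mul_ne_zero (mul_ne_zero h2F ha) h1p
    exact mul_left_cancel₀ hd (by linear_combination h1 - h2)
  have hbmm : Smm.ncard ≤ 1 := by
    apply hle1
    intro x hx y hy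
    have h1 := hmmEq x hx
    have h2 := hmmEq y hy
    have hd : 2 * a * (1 - u) ≠ 0 := mul_ne_zero (mul_ne_zero h2F ha) h1m
    exact mul_left_cancel₀ hd (by linear_combination h1 - h2)
  have hbpm : Spm.ncard ≤ 2 := quad_ncard_le_two h2u (Set.toFinite _) hpmEq
  have hbmp : Smp.ncard ≤ 2 := quad_ncard_le_two (neg_ne_zero.mpr h2u) (Set.toFinite _) hmpEq
  -- covering
  have hchain : S.ncard ≤ S0.ncard + (Spp.ncard + (Smm.ncard + (Spm.ncard + Smp.ncard))) := by
    have hsub : S ⊆ S0 ∪ (Spp ∪ (Smm ∪ (Spm ∪ Smp))) := by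
      intro x hx
      rcases eq_or_ne x 0 with h | h
      · exact Or.inl ⟨hx, Or.inl h⟩
      rcases eq_or_ne x (-a) with h' | h'
      · exact Or.inl ⟨hx, Or.inr h'⟩
      have hxa : x + a ≠ 0 := fun hh => h' (by linear_combination hh)
      rcases quadraticChar_dichotomy hxa with c1 | c1 <;>
        rcases quadraticChar_dichotomy h with c2 | c2
      · exact Or.inr (Or.inl ⟨hx, c1, c2⟩)
      · exact Or.inr (Or.inr (Or.inr (Or.inl ⟨hx, c1, c2⟩)))
      · exact Or.inr (Or.inr (Or.inr (Or.inr ⟨hx, c1, c2⟩)))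
      · exact Or.inr (Or.inr (Or.inl ⟨hx, c1, c2⟩))
    refine le_trans (Set.ncard_le_ncard hsub (Set.toFinite _)) ?_
    refine le_trans (Set.ncard_union_le _ _) ?_
    gcongr
    refine le_trans (Set.ncard_union_le _ _) ?_
    gcongr
    refine le_trans (Set.ncard_union_le _ _) ?_
    gcongr
    exact Set.ncard_union_le _ _
  by_cases h0S : (0 : F) ∈ S
  · -- b = a^2 (1 + u χ(a))
    have e0 := hzeroMem h0S
    rcases quadraticChar_dichotomy ha with hc | hc
    · -- χ(a) = 1 : b = a^2(1+u); Spp empty, Spm ≤ 1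
      rw [hc] at e0
      push_cast at e0
      have hpp0 : Spp.ncard = 0 := by
        apply hle0
        rintro x hx
        have h1 := hppEq x hx
        have hx0 : x = 0 := by
          have hz : (2 * a * (1 + u)) * x = 0 := by linear_combination h1 - e0
          rcases mul_eq_zero.mp hz with h | h
          · exact absurd h (mul_ne_zero (mul_ne_zero h2F ha) h1p)
          · exact h
        exact hne0of1 x hx.2.2 hx0
      have hpm1 : Spm.ncard ≤ 1 := by
        apply hle1
        intro x hx y hy
        have key : ∀ z, z ∈ Spm → 2 * u * z = -(2 * a * (1 + u)) := by
          intro z hz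
          have h1 := hpmEq z hz
          have hz0 : z ≠ 0 := hne0ofm1 z hz.2.2
          have hfac : z * (2 * u * z + 2 * a * (1 + u)) = 0 := by
            linear_combination h1 - e0
          rcases mul_eq_zero.mp hfac with h | h
          · exact absurd h hz0
          · linear_combination h
        exact mul_left_cancel₀ h2u ((key x hx).trans (key y hy).symm)
      omega
    · -- χ(a) = -1 : b = a^2(1-u); Smm empty, Smp ≤ 1
      rw [hc] at e0
      push_cast at e0
      have hmm0 : Smm.ncard = 0 := by
        apply hle0
        rintro x hx
        have h1 := hmmEq x hx
        have hx0 : x = 0 := by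
          have hz : (2 * a * (1 - u)) * x = 0 := by linear_combination h1 - e0
          rcases mul_eq_zero.mp hz with h | h
          · exact absurd h (mul_ne_zero (mul_ne_zero h2F ha) h1m)
          · exact h
        exact hne0ofm1 x hx.2.2 hx0
      have hmp1 : Smp.ncard ≤ 1 := by
        apply hle1
        intro x hx y hy
        have key : ∀ z, z ∈ Smp → -(2 * u) * z = -(2 * a * (1 - u)) := by
          intro z hz
          have h1 := hmpEq z hz
          have hz0 : z ≠ 0 := hne0of1 z hz.2.2
          have hfac : z * (-(2 * u) * z + 2 * a * (1 - u)) = 0 := by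
            linear_combination h1 - e0
          rcases mul_eq_zero.mp hfac with h | h
          · exact absurd h hz0
          · linear_combination h
        exact mul_left_cancel₀ (neg_ne_zero.mpr h2u) ((key x hx).trans (key y hy).symm)
      omega
  by_cases haS : (-a : F) ∈ S
  · -- b = -a^2 (1 - u χ(a))
    have e0 := hnegMem haS
    rcases quadraticChar_dichotomy ha with hc | hc
    · -- χ(a) = 1 : b = -a^2(1-u); Smm empty, Spm ≤ 1
      rw [hc] at e0
      push_cast at e0
      have hmm0 : Smm.ncard = 0 := by
        apply hle0
        rintro x hx
        have h1 := hmmEq x hx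
        have hxa : x = -a := by
          have hd : 2 * a * (1 - u) ≠ 0 := mul_ne_zero (mul_ne_zero h2F ha) h1m
          exact mul_left_cancel₀ hd (by linear_combination h1 - e0)
        have : x + a = 0 := by rw [hxa]; ring
        exact hne0ofm1 _ hx.2.1 this
      have hpm1 : Spm.ncard ≤ 1 := by
        apply hle1
        intro x hx y hy
        have key : ∀ z, z ∈ Spm → 2 * u * z = -(2 * a) := by
          intro z hz
          have h1 := hpmEq z hz
          have hza : z + a ≠ 0 := hne0of1 _ hz.2.1
          have hfac : (z + a) * (2 * u * z + 2 * a) = 0 := by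
            linear_combination h1 - e0
          rcases mul_eq_zero.mp hfac with h | h
          · exact absurd h hza
          · linear_combination h
        exact mul_left_cancel₀ h2u ((key x hx).trans (key y hy).symm)
      omega
    · -- χ(a) = -1 : b = -a^2(1+u); Spp empty, Smp ≤ 1
      rw [hc] at e0
      push_cast at e0
      have hpp0 : Spp.ncard = 0 := by
        apply hle0
        rintro x hx
        have h1 := hppEq x hx
        have hxa : x = -a := by
          have hd : 2 * a * (1 + u) ≠ 0 := mul_ne_zero (mul_ne_zero h2F ha) h1p
          exact mul_left_cancel₀ hd (by linear_combination h1 - e0)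
        have : x + a = 0 := by rw [hxa]; ring
        exact hne0of1 _ hx.2.1 this
      have hmp1 : Smp.ncard ≤ 1 := by
        apply hle1
        intro x hx y hy
        have key : ∀ z, z ∈ Smp → -(2 * u) * z = -(2 * a) := by
          intro z hz
          have h1 := hmpEq z hz
          have hza : z + a ≠ 0 := hne0ofm1 _ hz.2.1
          have hfac : (z + a) * (-(2 * u) * z + 2 * a) = 0 := by
            linear_combination h1 - e0
          rcases mul_eq_zero.mp hfac with h | h
          · exact absurd h hza
          · linear_combination h
        exact mul_left_cancel₀ (neg_ne_zero.mpr h2u) ((key x hx).trans (key y hy).symm)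
      omega
  -- neither 0 nor -a is a solution
  have hb00 : S0.ncard = 0 := by
    apply hle0
    rintro x ⟨hxS, hx⟩
    rcases hx with rfl | rfl
    · exact h0S hxS
    · exact haS hxS
  by_cases hbig1 : ∃ r ∈ Spm, ∃ s ∈ Spm, r ≠ s
  · by_cases hbig2 : ∃ r ∈ Smp, ∃ s ∈ Smp, r ≠ s
    · -- both quadratic classes full: Spp and Smm are empty
      obtain ⟨r, hr, s, hs, hrs⟩ := hbig1
      obtain ⟨r', hr', s', hs', hrs'⟩ := hbig2
      obtain ⟨hβ, hγ⟩ := quad_vieta h2u hrs (hpmEq r hr) (hpmEq s hs)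
      obtain ⟨hβ', hγ'⟩ := quad_vieta (neg_ne_zero.mpr h2u) hrs' (hmpEq r' hr') (hmpEq s' hs')
      -- character values
      have E1 : quadraticChar F (a ^ 2 * (1 + u) - b) = quadraticChar F (2 * u) := by
        rw [hγ, map_mul (quadraticChar F) (2*u) (r*s), map_mul (quadraticChar F) r s, hr.2.2, hs.2.2]
        ring
      have hE2 : -(a ^ 2 * (1 - u)) - b = 2 * u * ((r + a) * (s + a)) := by
        linear_combination hγ - a * hβ
      have E2 : quadraticChar F (-(a ^ 2 * (1 - u)) - b) = quadraticChar F (2 * u) := by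
        rw [hE2, map_mul (quadraticChar F) (2*u) ((r+a)*(s+a)), map_mul (quadraticChar F) (r+a) (s+a), hr.2.1, hs.2.1]
        ring
      have hE3 : b - a ^ 2 * (1 - u) = 2 * u * (r' * s') := by
        linear_combination -hγ'
      have E3 : quadraticChar F (b - a ^ 2 * (1 - u)) = quadraticChar F (2 * u) := by
        rw [hE3, map_mul (quadraticChar F) (2*u) (r'*s'), map_mul (quadraticChar F) r' s', hr'.2.2, hs'.2.2]
        ring
      have hE4 : b + a ^ 2 * (1 + u) = 2 * u * ((r' + a) * (s' + a)) := by
        linear_combination -hγ' + a * hβ'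
      have E4 : quadraticChar F (b + a ^ 2 * (1 + u)) = quadraticChar F (2 * u) := by
        rw [hE4, map_mul (quadraticChar F) (2*u) ((r'+a)*(s'+a)), map_mul (quadraticChar F) (r'+a) (s'+a), hr'.2.1, hs'.2.1]
        ring
      have hdich := quadraticChar_dichotomy h2u
      have hpp0 : Spp.ncard = 0 := by
        apply hle0
        rintro x hx
        have h1 := hppEq x hx
        have c1 : quadraticChar F (b - a ^ 2 * (1 + u))
            = quadraticChar F (2 * a * (1 + u)) := by
          rw [show b - a ^ 2 * (1 + u) = 2 * a * (1 + u) * x by linear_combination -h1,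
            map_mul, hx.2.2]
          ring
        have c2 : quadraticChar F (b - a ^ 2 * (1 + u)) = - quadraticChar F (2 * u) := by
          rw [show b - a ^ 2 * (1 + u) = -(a ^ 2 * (1 + u) - b) by ring, hχneg, E1]
        have c3 : quadraticChar F (b + a ^ 2 * (1 + u))
            = quadraticChar F (2 * a * (1 + u)) := by
          rw [show b + a ^ 2 * (1 + u) = 2 * a * (1 + u) * (x + a) by linear_combination -h1,
            map_mul, hx.2.1]
          ring
        have c4 := E4
        omega
      have hmm0 : Smm.ncard = 0 := by
        apply hle0
        rintro x hx
        have h1 := hmmEq x hx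
        have c1 : quadraticChar F (b - a ^ 2 * (1 - u))
            = - quadraticChar F (2 * a * (1 - u)) := by
          rw [show b - a ^ 2 * (1 - u) = 2 * a * (1 - u) * x by linear_combination -h1,
            map_mul, hx.2.2]
          ring
        have c2 := E3
        have c3 : quadraticChar F (b + a ^ 2 * (1 - u))
            = - quadraticChar F (2 * a * (1 - u)) := by
          rw [show b + a ^ 2 * (1 - u) = 2 * a * (1 - u) * (x + a) by linear_combination -h1,
            map_mul, hx.2.1]
          ring
        have c4 : quadraticChar F (b + a ^ 2 * (1 - u)) = - quadraticChar F (2 * u) := by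
          rw [show b + a ^ 2 * (1 - u) = -(-(a ^ 2 * (1 - u)) - b) by ring, hχneg, E2]
        omega
      omega
    · -- Smp has at most one element
      push_neg at hbig2
      have hmp1 : Smp.ncard ≤ 1 := hle1 _ fun x hx y hy => hbig2 x hx y hy
      omega
  · push_neg at hbig1
    have hpm1 : Spm.ncard ≤ 1 := hle1 _ fun x hx y hy => hbig1 x hx y hy
    omega
end

section
/- Let q be an odd prime power with q ≡ 3 (mod 4), η the quadratic character of F_q, and u ∈ F_q with u ∉ {0, 1, -1} such that η(1+u) = η(1-u). Define F_{2,u}(x) = x^2(1 + u·η(x)). Then the differential uniformity of F_{2,u} is at most 4. -/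
open Set

private lemma aux_main {F : Type*} [Field F] [Fintype F] [DecidableEq F]
    (hm1 : quadraticChar F (-1) = -1) (h2 : (2 : F) ≠ 0)
    (u : F) (hu0 : u ≠ 0) (h1u : (1 : F) + u ≠ 0) (h2u : (1 : F) - u ≠ 0)
    (hη : quadraticChar F (1 + u) = quadraticChar F (1 - u)) (b : F) :
    {x : F | (x + 1) ^ 2 * (1 + u * ((quadraticChar F (x + 1) : ℤ) : F))
        - x ^ 2 * (1 + u * ((quadraticChar F x : ℤ) : F)) = b}.ncard ≤ 4 := by
  classical
  have hχ2 : quadraticChar F 2 ≠ 0 := fun h => h2 (quadraticChar_eq_zero_iff.mp h)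
  have hχu : quadraticChar F u ≠ 0 := fun h => hu0 (quadraticChar_eq_zero_iff.mp h)
  have hp0 : (2 : F) * (1 + u) ≠ 0 := mul_ne_zero h2 h1u
  have hm0 : (2 : F) * (1 - u) ≠ 0 := mul_ne_zero h2 h2u
  have hgen : ∀ (c d t : F) (e : ℤ), quadraticChar F t = e → (2*c)*t = d →
      quadraticChar F d = quadraticChar F 2 * quadraticChar F c * e := by
    intro c d t e ht hlin
    have h := congrArg (quadraticChar F) hlin
    simp only [map_mul] at h
    rw [ht] at h
    exact h.symm
  set S : Set F := {x : F | (x + 1) ^ 2 * (1 + u * ((quadraticChar F (x + 1) : ℤ) : F))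
      - x ^ 2 * (1 + u * ((quadraticChar F x : ℤ) : F)) = b} with hSdef
  set P1 : Set F := {x : F | x ∈ S ∧ quadraticChar F (x+1) = 1 ∧ quadraticChar F x = -1}
    with hP1def
  set P2 : Set F := {x : F | x ∈ S ∧ quadraticChar F (x+1) = -1 ∧ quadraticChar F x = 1}
    with hP2def
  set R : Set F := S \ (P1 ∪ P2) with hRdef
  -- membership equations
  have memS : ∀ x : F, x ∈ S ↔ (x + 1) ^ 2 * (1 + u * ((quadraticChar F (x + 1) : ℤ) : F))
      - x ^ 2 * (1 + u * ((quadraticChar F x : ℤ) : F)) = b := by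
    intro x; rw [hSdef]; exact Iff.rfl
  have memP1 : ∀ x : F, x ∈ S → quadraticChar F (x+1) = 1 → quadraticChar F x = -1 →
      2*u*x^2 + 2*(1+u)*x + (1+u) = b := by
    intro x hx h1 h0
    rw [memS] at hx
    rw [h1, h0] at hx
    push_cast at hx
    linear_combination hx
  have memP2 : ∀ x : F, x ∈ S → quadraticChar F (x+1) = -1 → quadraticChar F x = 1 →
      -(2*u)*x^2 + 2*(1-u)*x + (1-u) = b := by
    intro x hx h1 h0
    rw [memS] at hx
    rw [h1, h0] at hx
    push_cast at hx
    linear_combination hx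
  -- classification of R
  have hRtype : ∀ t ∈ R, (t = 0 ∧ b = 1 + u) ∨ (t = -1 ∧ b = u - 1)
      ∨ (quadraticChar F (t+1) = 1 ∧ quadraticChar F t = 1 ∧ 2*(1+u)*t = b - (1+u))
      ∨ (quadraticChar F (t+1) = -1 ∧ quadraticChar F t = -1 ∧ 2*(1-u)*t = b - (1-u)) := by
    intro t ht
    rw [hRdef] at ht
    obtain ⟨htS, htP⟩ := ht
    by_cases ht0 : t = 0
    · left
      refine ⟨ht0, ?_⟩
      subst ht0
      rw [memS] at htS
      rw [show (0:F) + 1 = 1 by ring, map_one] at htS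
      push_cast at htS
      linear_combination -htS
    by_cases htm : t = -1
    · right; left
      refine ⟨htm, ?_⟩
      subst htm
      rw [memS] at htS
      rw [show (-1:F) + 1 = 0 by ring, hm1] at htS
      push_cast at htS
      linear_combination -htS
    have ht1 : t + 1 ≠ 0 := fun h => htm (by linear_combination h)
    rcases quadraticChar_dichotomy ht0 with h0 | h0 <;>
      rcases quadraticChar_dichotomy ht1 with h1 | h1
    · -- χ t = 1, χ(t+1) = 1 : type A
      right; right; left
      refine ⟨h1, h0, ?_⟩
      have hx := memS t |>.mp htS
      rw [h1, h0] at hx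
      push_cast at hx
      linear_combination hx
    · -- χ t = 1, χ(t+1) = -1 : t ∈ P2, contradiction
      exact absurd (Set.mem_union_right _ (by rw [hP2def]; exact ⟨htS, h1, h0⟩)) htP
    · -- χ t = -1, χ(t+1) = 1 : t ∈ P1
      exact absurd (Set.mem_union_left _ (by rw [hP1def]; exact ⟨htS, h1, h0⟩)) htP
    · -- type B
      right; right; right
      refine ⟨h1, h0, ?_⟩
      have hx := memS t |>.mp htS
      rw [h1, h0] at hx
      push_cast at hx
      linear_combination hx
  -- R ⊆ {p0, m0}
  have hRsub : R ⊆ {(b-(1+u))/(2*(1+u)), (b-(1-u))/(2*(1-u))} := by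
    intro t ht
    simp only [Set.mem_insert_iff, Set.mem_singleton_iff]
    rcases hRtype t ht with ⟨rfl, hb⟩ | ⟨rfl, hb⟩ | ⟨_, _, hlin⟩ | ⟨_, _, hlin⟩
    · left; rw [eq_div_iff hp0]; linear_combination -hb
    · right; rw [eq_div_iff hm0]; linear_combination -hb
    · left; rw [eq_div_iff hp0]; linear_combination hlin
    · right; rw [eq_div_iff hm0]; linear_combination hlin
  have hRle : R.ncard ≤ 2 := by
    refine le_trans (Set.ncard_le_ncard hRsub (Set.toFinite _)) ?_
    refine le_trans (Set.ncard_insert_le _ _) ?_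
    simp
  -- P1, P2 cardinality bounds
  have hP1le : P1.ncard ≤ 2 := by
    rcases P1.eq_empty_or_nonempty with h | ⟨z, hz⟩
    · simp [h]
    have hzc := hz
    rw [hP1def] at hzc
    obtain ⟨hzS, hz1, hz0⟩ := hzc
    have hz' := memP1 z hzS hz1 hz0
    refine le_trans (Set.ncard_le_ncard (t := {z, -(1+u)/u - z}) ?_ (Set.toFinite _)) ?_
    · intro w hw
      rw [hP1def] at hw
      obtain ⟨hwS, hw1, hw0⟩ := hw
      have hw' := memP1 w hwS hw1 hw0
      have key : (w - z) * (2*u*(w+z) + 2*(1+u)) = 0 := by linear_combination hw' - hz'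
      rcases mul_eq_zero.mp key with h | h
      · left; exact sub_eq_zero.mp h
      · right
        rw [Set.mem_singleton_iff, eq_sub_iff_add_eq, eq_div_iff hu0]
        apply mul_left_cancel₀ h2
        linear_combination h
    · refine le_trans (Set.ncard_insert_le _ _) ?_
      simp
  have hP2le : P2.ncard ≤ 2 := by
    rcases P2.eq_empty_or_nonempty with h | ⟨z, hz⟩
    · simp [h]
    have hzc := hz
    rw [hP2def] at hzc
    obtain ⟨hzS, hz1, hz0⟩ := hzc
    have hz' := memP2 z hzS hz1 hz0
    refine le_trans (Set.ncard_le_ncard (t := {z, (1-u)/u - z}) ?_ (Set.toFinite _)) ?_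
    · intro w hw
      rw [hP2def] at hw
      obtain ⟨hwS, hw1, hw0⟩ := hw
      have hw' := memP2 w hwS hw1 hw0
      have key : (w - z) * (-(2*u)*(w+z) + 2*(1-u)) = 0 := by linear_combination hw' - hz'
      rcases mul_eq_zero.mp key with h | h
      · left; exact sub_eq_zero.mp h
      · right
        rw [Set.mem_singleton_iff, eq_sub_iff_add_eq, eq_div_iff hu0]
        apply mul_left_cancel₀ h2
        linear_combination -h
    · refine le_trans (Set.ncard_insert_le _ _) ?_
      simp
  -- pair facts
  have hP1pair : 1 < P1.ncard →
      quadraticChar F (1+u-b) = quadraticChar F 2 * quadraticChar F u ∧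
      quadraticChar F (u-1-b) = quadraticChar F 2 * quadraticChar F u := by
    intro h
    obtain ⟨z, hz, w, hw, hzw⟩ := (Set.one_lt_ncard (Set.toFinite _)).mp h
    rw [hP1def] at hz hw
    obtain ⟨hzS, hz1, hz0⟩ := hz
    obtain ⟨hwS, hw1, hw0⟩ := hw
    have hz' := memP1 z hzS hz1 hz0
    have hw' := memP1 w hwS hw1 hw0
    have key : (z - w) * (2*u*(z+w) + 2*(1+u)) = 0 := by linear_combination hz' - hw'
    have hsum : u*(z+w) + (1+u) = 0 := by
      rcases mul_eq_zero.mp key with h' | h'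
      · exact absurd (sub_eq_zero.mp h') hzw
      · apply mul_left_cancel₀ h2; linear_combination h'
    have hprod : (2*u)*(z*w) = 1+u-b := by linear_combination (2*z) * hsum - hz'
    have hprod2 : (2*u)*((z+1)*(w+1)) = u-1-b := by linear_combination hprod + 2*hsum
    constructor
    · have h' := congrArg (quadraticChar F) hprod
      simp only [map_mul] at h'
      rw [hz0, hw0] at h'
      rw [← h']; ring
    · have h' := congrArg (quadraticChar F) hprod2
      simp only [map_mul] at h'
      rw [hz1, hw1] at h'
      rw [← h']; ring
  have hP2pair : 1 < P2.ncard →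
      quadraticChar F (b-(1-u)) = quadraticChar F 2 * quadraticChar F u ∧
      quadraticChar F (b+(1+u)) = quadraticChar F 2 * quadraticChar F u := by
    intro h
    obtain ⟨z, hz, w, hw, hzw⟩ := (Set.one_lt_ncard (Set.toFinite _)).mp h
    rw [hP2def] at hz hw
    obtain ⟨hzS, hz1, hz0⟩ := hz
    obtain ⟨hwS, hw1, hw0⟩ := hw
    have hz' := memP2 z hzS hz1 hz0
    have hw' := memP2 w hwS hw1 hw0
    have key : (z - w) * (-(2*u)*(z+w) + 2*(1-u)) = 0 := by linear_combination hz' - hw'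
    have hsum : u*(z+w) - (1-u) = 0 := by
      rcases mul_eq_zero.mp key with h' | h'
      · exact absurd (sub_eq_zero.mp h') hzw
      · apply mul_left_cancel₀ h2; linear_combination -h'
    have hprod : (2*u)*(z*w) = b-(1-u) := by linear_combination (2*z) * hsum + hz'
    have hprod2 : (2*u)*((z+1)*(w+1)) = b+(1+u) := by linear_combination hprod + 2*hsum
    constructor
    · have h' := congrArg (quadraticChar F) hprod
      simp only [map_mul] at h'
      rw [hz0, hw0] at h'
      rw [← h']; ring
    · have h' := congrArg (quadraticChar F) hprod2
      simp only [map_mul] at h'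
      rw [hz1, hw1] at h'
      rw [← h']; ring
  -- key character deductions
  have hKA : quadraticChar F (1+u-b) = quadraticChar F 2 * quadraticChar F u →
      ∀ t : F, quadraticChar F t = 1 → 2*(1+u)*t = b - (1+u) →
      quadraticChar F (1+u) = -quadraticChar F u := by
    intro F1a t h0 hlin
    have hA := hgen (1+u) (b-(1+u)) t 1 h0 (by linear_combination hlin)
    have hrel : quadraticChar F (b-(1+u)) = -quadraticChar F (1+u-b) := by
      rw [show b-(1+u) = -1*(1+u-b) by ring, map_mul, hm1]; ring
    rw [hrel, F1a] at hA
    rcases quadraticChar_dichotomy h2 with hc | hc <;> rw [hc] at hA <;> linarith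
  have hKB : quadraticChar F (u-1-b) = quadraticChar F 2 * quadraticChar F u →
      ∀ t : F, quadraticChar F (t+1) = -1 → 2*(1-u)*t = b - (1-u) →
      quadraticChar F (1-u) = quadraticChar F u := by
    intro F1b t h1 hlin
    have hB := hgen (1-u) (b+(1-u)) (t+1) (-1) h1 (by linear_combination hlin)
    have hrel : quadraticChar F (b+(1-u)) = -quadraticChar F (u-1-b) := by
      rw [show b+(1-u) = -1*(u-1-b) by ring, map_mul, hm1]; ring
    rw [hrel, F1b] at hB
    rcases quadraticChar_dichotomy h2 with hc | hc <;> rw [hc] at hB <;> linarith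
  have hKA' : quadraticChar F (b+(1+u)) = quadraticChar F 2 * quadraticChar F u →
      ∀ t : F, quadraticChar F (t+1) = 1 → 2*(1+u)*t = b - (1+u) →
      quadraticChar F (1+u) = quadraticChar F u := by
    intro F2b t h1 hlin
    have hA := hgen (1+u) (b+(1+u)) (t+1) 1 h1 (by linear_combination hlin)
    rw [F2b] at hA
    rcases quadraticChar_dichotomy h2 with hc | hc <;> rw [hc] at hA <;> linarith
  have hKO' : quadraticChar F (b+(1+u)) = quadraticChar F 2 * quadraticChar F u →
      b = 1 + u → quadraticChar F (1+u) = quadraticChar F u := by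
    intro F2b hb
    have hA := F2b
    rw [show b + (1+u) = 2*(1+u) by linear_combination hb, map_mul] at hA
    rcases quadraticChar_dichotomy h2 with hc | hc <;> rw [hc] at hA <;> linarith
  have hKB' : quadraticChar F (b-(1-u)) = quadraticChar F 2 * quadraticChar F u →
      ∀ t : F, quadraticChar F t = -1 → 2*(1-u)*t = b - (1-u) →
      quadraticChar F (1-u) = -quadraticChar F u := by
    intro F2a t h0 hlin
    have hB := hgen (1-u) (b-(1-u)) t (-1) h0 (by linear_combination hlin)
    rw [F2a] at hB
    rcases quadraticChar_dichotomy h2 with hc | hc <;> rw [hc] at hB <;> linarith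
  have hKM' : quadraticChar F (b-(1-u)) = quadraticChar F 2 * quadraticChar F u →
      b = u - 1 → quadraticChar F (1-u) = -quadraticChar F u := by
    intro F2a hb
    have hB := F2a
    rw [show b - (1-u) = -1*(2*(1-u)) by linear_combination hb, map_mul, map_mul, hm1] at hB
    rcases quadraticChar_dichotomy h2 with hc | hc <;> rw [hc] at hB <;> linarith
  have hcontra : quadraticChar F (1+u) = -quadraticChar F u →
      quadraticChar F (1-u) = quadraticChar F u → False := by
    intro hA hB
    rw [hη, hB] at hA
    exact hχu (by linarith)
  have hcontra' : quadraticChar F (1+u) = quadraticChar F u →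
      quadraticChar F (1-u) = -quadraticChar F u → False := by
    intro hA hB
    rw [hη, hB] at hA
    exact hχu (by linarith)
  -- b exclusions under P1 full
  have habs1 : 1 < P1.ncard → b ≠ 1 + u := by
    intro h hb
    have h0 : quadraticChar F (1+u-b) = 0 := by
      rw [show (1:F)+u-b = 0 by linear_combination -hb]; exact quadraticChar_zero
    exact mul_ne_zero hχ2 hχu ((hP1pair h).1.symm.trans h0)
  have habs2 : 1 < P1.ncard → b ≠ u - 1 := by
    intro h hb
    have h0 : quadraticChar F (u-1-b) = 0 := by
      rw [show u-1-b = 0 by linear_combination -hb]; exact quadraticChar_zero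
    exact mul_ne_zero hχ2 hχu ((hP1pair h).2.symm.trans h0)
  -- case lemmas
  have hcase1 : 1 < P1.ncard → R.ncard ≤ 1 := by
    intro h
    obtain ⟨F1a, F1b⟩ := hP1pair h
    rw [Set.ncard_le_one_iff (Set.toFinite _)]
    intro t s ht hs
    rcases hRtype t ht with ⟨rfl, hb⟩ | ⟨rfl, hb⟩ | ⟨h1, h0, hlin⟩ | ⟨h1, h0, hlin⟩
    · exact absurd hb (habs1 h)
    · exact absurd hb (habs2 h)
    · rcases hRtype s hs with ⟨rfl, hb⟩ | ⟨rfl, hb⟩ | ⟨g1, g0, glin⟩ | ⟨g1, g0, glin⟩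
      · exact absurd hb (habs1 h)
      · exact absurd hb (habs2 h)
      · exact mul_left_cancel₀ hp0 (by linear_combination hlin - glin)
      · exact absurd (hKB F1b s g1 glin) (hcontra (hKA F1a t h0 hlin))
    · rcases hRtype s hs with ⟨rfl, hb⟩ | ⟨rfl, hb⟩ | ⟨g1, g0, glin⟩ | ⟨g1, g0, glin⟩
      · exact absurd hb (habs1 h)
      · exact absurd hb (habs2 h)
      · exact absurd (hKB F1b t h1 hlin) (hcontra (hKA F1a s g0 glin))
      · exact mul_left_cancel₀ hm0 (by linear_combination hlin - glin)
  have hcase2 : 1 < P2.ncard → R.ncard ≤ 1 := by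
    intro h
    obtain ⟨F2a, F2b⟩ := hP2pair h
    rw [Set.ncard_le_one_iff (Set.toFinite _)]
    intro t s ht hs
    rcases hRtype t ht with ⟨rfl, hb⟩ | ⟨rfl, hb⟩ | ⟨h1, h0, hlin⟩ | ⟨h1, h0, hlin⟩
    · rcases hRtype s hs with ⟨rfl, gb⟩ | ⟨rfl, gb⟩ | ⟨g1, g0, glin⟩ | ⟨g1, g0, glin⟩
      · rfl
      · exact absurd (by linear_combination gb - hb : (2:F) = 0) h2
      · exact (mul_left_cancel₀ hp0 (by linear_combination glin + hb :
          (2:F)*(1+u)*s = 2*(1+u)*0)).symm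
      · exact absurd (hKB' F2a s g0 glin) (hcontra' (hKO' F2b hb))
    · rcases hRtype s hs with ⟨rfl, gb⟩ | ⟨rfl, gb⟩ | ⟨g1, g0, glin⟩ | ⟨g1, g0, glin⟩
      · exact absurd (by linear_combination hb - gb : (2:F) = 0) h2
      · rfl
      · exact absurd (hKM' F2a hb) (fun hB => hcontra' (hKA' F2b s g1 glin) hB)
      · exact (mul_left_cancel₀ hm0 (by linear_combination glin + hb :
          (2:F)*(1-u)*s = 2*(1-u)*(-1))).symm
    · rcases hRtype s hs with ⟨rfl, gb⟩ | ⟨rfl, gb⟩ | ⟨g1, g0, glin⟩ | ⟨g1, g0, glin⟩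
      · exact mul_left_cancel₀ hp0 (by linear_combination hlin + gb :
          (2:F)*(1+u)*t = 2*(1+u)*0)
      · exact absurd (hKM' F2a gb) (fun hB => hcontra' (hKA' F2b t h1 hlin) hB)
      · exact mul_left_cancel₀ hp0 (by linear_combination hlin - glin)
      · exact absurd (hKB' F2a s g0 glin) (hcontra' (hKA' F2b t h1 hlin))
    · rcases hRtype s hs with ⟨rfl, gb⟩ | ⟨rfl, gb⟩ | ⟨g1, g0, glin⟩ | ⟨g1, g0, glin⟩
      · exact absurd (hKB' F2a t h0 hlin) (hcontra' (hKO' F2b gb))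
      · exact mul_left_cancel₀ hm0 (by linear_combination hlin + gb :
          (2:F)*(1-u)*t = 2*(1-u)*(-1))
      · exact absurd (hKB' F2a t h0 hlin) (hcontra' (hKA' F2b s g1 glin))
      · exact mul_left_cancel₀ hm0 (by linear_combination hlin - glin)
  have hcase12 : 1 < P1.ncard → 1 < P2.ncard → R.ncard = 0 := by
    intro hq1 hq2
    obtain ⟨F1a, F1b⟩ := hP1pair hq1
    obtain ⟨F2a, F2b⟩ := hP2pair hq2
    rw [Set.ncard_eq_zero (Set.toFinite _)]
    rw [Set.eq_empty_iff_forall_notMem]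
    intro t ht
    rcases hRtype t ht with ⟨rfl, hb⟩ | ⟨rfl, hb⟩ | ⟨h1, h0, hlin⟩ | ⟨h1, h0, hlin⟩
    · exact absurd hb (habs1 hq1)
    · exact absurd hb (habs2 hq1)
    · have k1 := hKA F1a t h0 hlin
      have k2 := hKA' F2b t h1 hlin
      rw [k2] at k1
      exact hχu (by linarith)
    · have k1 := hKB F1b t h1 hlin
      have k2 := hKB' F2a t h0 hlin
      rw [k1] at k2
      exact hχu (by linarith)
  -- counting
  have hcover : S ⊆ (P1 ∪ P2) ∪ R := by
    intro x hx
    by_cases h : x ∈ P1 ∪ P2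
    · exact Or.inl h
    · exact Or.inr (by rw [hRdef]; exact ⟨hx, h⟩)
  have htot : S.ncard ≤ P1.ncard + P2.ncard + R.ncard := by
    calc S.ncard ≤ ((P1 ∪ P2) ∪ R).ncard := Set.ncard_le_ncard hcover (Set.toFinite _)
      _ ≤ (P1 ∪ P2).ncard + R.ncard := Set.ncard_union_le _ _
      _ ≤ P1.ncard + P2.ncard + R.ncard :=
          Nat.add_le_add_right (Set.ncard_union_le _ _) _
  by_cases hc1 : 1 < P1.ncard
  · by_cases hc2 : 1 < P2.ncard
    · have := hcase12 hc1 hc2; omega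
    · have := hcase1 hc1; omega
  · by_cases hc2 : 1 < P2.ncard
    · have := hcase2 hc2; omega
    · omega

/-- for `u ∉ {0, ±1}` with `η(1+u) = η(1-u)`, the differential
uniformity of `F_{2,u}` is at most `4`. -/
theorem stmt_12 {F : Type*} [Field F] [Fintype F] [DecidableEq F]
    (hodd : Odd (Fintype.card F)) (h4 : Fintype.card F % 4 = 3)
    (u : F) (hu : u ∉ ({0, 1, -1} : Set F))
    (hη : quadraticChar F (1 + u) = quadraticChar F (1 - u)) :
    ∀ a b : F, a ≠ 0 →
      {x : F | (x + a) ^ 2 * (1 + u * ((quadraticChar F (x + a) : ℤ) : F))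
          - x ^ 2 * (1 + u * ((quadraticChar F x : ℤ) : F)) = b}.ncard ≤ 4 := by
  simp only [Set.mem_insert_iff, Set.mem_singleton_iff, not_or] at hu
  obtain ⟨hu0, hu1, hu2⟩ := hu
  have hF : ringChar F ≠ 2 := by
    intro h
    have h' := FiniteField.even_card_iff_char_two.mp h
    obtain ⟨k, hk⟩ := hodd
    omega
  have hm1 : quadraticChar F (-1) = -1 := by
    rw [quadraticChar_neg_one hF]; exact ZMod.χ₄_nat_three_mod_four h4
  have h2 : (2 : F) ≠ 0 := by
    intro h
    have h1 : (-1 : F) = 1 := by linear_combination -h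
    rw [h1, map_one] at hm1; norm_num at hm1
  have h1u : (1 : F) + u ≠ 0 := fun h => hu2 (by linear_combination h)
  have h2u : (1 : F) - u ≠ 0 := fun h => hu1 (by linear_combination -h)
  intro a b ha
  have ha2 : a ^ 2 ≠ 0 := pow_ne_zero _ ha
  have himg : ∀ u' : F, ((quadraticChar F a : ℤ) : F) * u = u' →
      {x : F | (x + a) ^ 2 * (1 + u * ((quadraticChar F (x + a) : ℤ) : F))
          - x ^ 2 * (1 + u * ((quadraticChar F x : ℤ) : F)) = b}
        = (fun y => a * y) '' {y : F |
          (y + 1) ^ 2 * (1 + u' * ((quadraticChar F (y + 1) : ℤ) : F))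
          - y ^ 2 * (1 + u' * ((quadraticChar F y : ℤ) : F)) = b / a ^ 2} := by
    intro u' hu'
    have hmem : ∀ y : F,
        ((a*y + a) ^ 2 * (1 + u * ((quadraticChar F (a*y + a) : ℤ) : F))
          - (a*y) ^ 2 * (1 + u * ((quadraticChar F (a*y) : ℤ) : F)) = b)
        ↔ ((y + 1) ^ 2 * (1 + u' * ((quadraticChar F (y + 1) : ℤ) : F))
          - y ^ 2 * (1 + u' * ((quadraticChar F y : ℤ) : F)) = b / a ^ 2) := by
      intro y
      have e1 : a * y + a = a * (y + 1) := by ring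
      rw [e1]
      have c1 : ((quadraticChar F (a*(y+1)) : ℤ) : F)
          = ((quadraticChar F a : ℤ) : F) * ((quadraticChar F (y+1) : ℤ) : F) := by
        rw [map_mul]; push_cast; ring
      have c0 : ((quadraticChar F (a*y) : ℤ) : F)
          = ((quadraticChar F a : ℤ) : F) * ((quadraticChar F y : ℤ) : F) := by
        rw [map_mul]; push_cast; ring
      rw [c1, c0, eq_div_iff ha2]
      constructor
      · intro h
        linear_combination h - (a^2*(y+1)^2*((quadraticChar F (y+1) : ℤ) : F)
            - a^2*y^2*((quadraticChar F y : ℤ) : F)) * hu'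
      · intro h
        linear_combination h + (a^2*(y+1)^2*((quadraticChar F (y+1) : ℤ) : F)
            - a^2*y^2*((quadraticChar F y : ℤ) : F)) * hu'
    ext x
    simp only [Set.mem_setOf_eq, Set.mem_image]
    constructor
    · intro hx
      refine ⟨x / a, (hmem (x / a)).mp ?_, by field_simp⟩
      have hxa : a * (x / a) = x := by field_simp
      rw [hxa]
      exact hx
    · rintro ⟨y, hy, rfl⟩
      exact (hmem y).mpr hy
  rcases quadraticChar_dichotomy ha with hqa | hqa
  · rw [himg u (by rw [hqa]; push_cast; ring),
      Set.ncard_image_of_injective _ (mul_right_injective₀ ha)]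
    exact aux_main hm1 h2 u hu0 h1u h2u hη (b / a ^ 2)
  · rw [himg (-u) (by rw [hqa]; push_cast; ring),
      Set.ncard_image_of_injective _ (mul_right_injective₀ ha)]
    refine aux_main hm1 h2 (-u) (neg_ne_zero.mpr hu0) ?_ ?_ ?_ (b / a ^ 2)
    · intro h; exact hu1 (by linear_combination -h)
    · intro h; exact hu2 (by linear_combination h)
    · rw [show (1:F) + -u = 1 - u by ring, show (1:F) - -u = 1 + u by ring]
      exact hη.symm
end

section
/- Let q be a power of a prime p ≠ 3 with q ≡ 7 (mod 8), and let η be the quadratic character of F_q. Define F(x) = x^2(1 + (1/3)·η(x)). Then δ_F(1,b) ≤ 3 for every b ∈ F_q, where δ_F(1,b) = #{x ∈ F_q : F(x+1) - F(x) = b}. -/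
private lemma subset_triple_ncard_le {α : Type*} {s : Set α} {a b c : α}
    (h : s ⊆ ({a, b, c} : Set α)) : s.ncard ≤ 3 := by
  have hfin : (({a, b, c} : Set α)).Finite :=
    ((Set.finite_singleton c).insert b).insert a
  refine le_trans (Set.ncard_le_ncard h hfin) ?_
  calc ({a, b, c} : Set α).ncard ≤ ({b, c} : Set α).ncard + 1 := Set.ncard_insert_le _ _
    _ ≤ (({c} : Set α).ncard + 1) + 1 := Nat.add_le_add_right (Set.ncard_insert_le _ _) _
    _ ≤ 3 := by simp

/-- for `p ≠ 3`, `q ≡ 7 (mod 8)`, `δ_F(1,b) ≤ 3` for every `b`,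
where `F(x) = x^2 (1 + 3⁻¹ η(x))`. -/
theorem stmt_14 {F : Type*} [Field F] [Fintype F] [DecidableEq F]
    (h8 : Fintype.card F % 8 = 7) (h3 : (3 : F) ≠ 0) :
    ∀ b : F,
      {x : F | (x + 1) ^ 2 * (1 + (3 : F)⁻¹ * ((quadraticChar F (x + 1) : ℤ) : F))
          - x ^ 2 * (1 + (3 : F)⁻¹ * ((quadraticChar F x : ℤ) : F)) = b}.ncard ≤ 3 := by
  intro b
  -- basic facts about the field
  have hchar : ringChar F ≠ 2 := by
    intro h
    have := FiniteField.even_card_iff_char_two.mp h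
    omega
  have h2 : (2 : F) ≠ 0 := Ring.two_ne_zero hchar
  have h4 : (4 : F) ≠ 0 := by
    have : (4 : F) = 2 ^ 2 := by norm_num
    rw [this]; exact pow_ne_zero _ h2
  have h8f : (8 : F) ≠ 0 := by
    have : (8 : F) = 2 ^ 3 := by norm_num
    rw [this]; exact pow_ne_zero _ h2
  have sq2 : quadraticChar F 2 = 1 :=
    (quadraticChar_one_iff_isSquare h2).mpr
      (FiniteField.isSquare_two_iff.mpr ⟨by omega, by omega⟩)
  have sqm1 : quadraticChar F (-1) = -1 := by
    refine quadraticChar_neg_one_iff_not_isSquare.mpr ?_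
    rw [FiniteField.isSquare_neg_one_iff]
    omega
  have sq4 : quadraticChar F 4 = 1 := by
    have : (4 : F) = 2 * 2 := by norm_num
    rw [this, map_mul, sq2]; norm_num
  have sq8 : quadraticChar F 8 = 1 := by
    have : (8 : F) = 2 * 4 := by norm_num
    rw [this, map_mul, sq2, sq4]; norm_num
  have tri : ∀ x : F, quadraticChar F x = 0 ∨ quadraticChar F x = 1 ∨ quadraticChar F x = -1 := by
    intro x
    by_cases hx : x = 0
    · left; rw [hx]; exact quadraticChar_zero
    · right; exact quadraticChar_dichotomy hx
  have nz_of_one : ∀ x : F, quadraticChar F x = 1 → x ≠ 0 := by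
    intro x hx h0; rw [h0, quadraticChar_zero] at hx; exact absurd hx (by norm_num)
  have nz_of_neg : ∀ x : F, quadraticChar F x = -1 → x ≠ 0 := by
    intro x hx h0; rw [h0, quadraticChar_zero] at hx; exact absurd hx (by norm_num)
  set S : Set F := {x : F | (x + 1) ^ 2 * (1 + (3 : F)⁻¹ * ((quadraticChar F (x + 1) : ℤ) : F))
          - x ^ 2 * (1 + (3 : F)⁻¹ * ((quadraticChar F x : ℤ) : F)) = b} with hSdef
  have h3' : (3 : F)⁻¹ * 3 = 1 := inv_mul_cancel₀ h3
  have master : ∀ z : F, z ∈ S →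
      3 * (2 * z + 1) + ((quadraticChar F (z + 1) : ℤ) : F) * (z + 1) ^ 2
        - ((quadraticChar F z : ℤ) : F) * z ^ 2 = 3 * b := by
    intro z hz
    have h : (z + 1) ^ 2 * (1 + (3 : F)⁻¹ * ((quadraticChar F (z + 1) : ℤ) : F))
          - z ^ 2 * (1 + (3 : F)⁻¹ * ((quadraticChar F z : ℤ) : F)) = b := hz
    linear_combination 3 * h -
      (((quadraticChar F (z + 1) : ℤ) : F) * (z + 1) ^ 2
        - ((quadraticChar F z : ℤ) : F) * z ^ 2) * h3'
  -- main case analysis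
  by_cases hD : ∃ y, y ∈ S ∧ quadraticChar F y = 1 ∧ quadraticChar F (y + 1) = -1
  · -- a D-type solution exists
    obtain ⟨y, hyS, hy1, hy2⟩ := hD
    have hEy := master y hyS
    rw [hy1, hy2] at hEy
    push_cast at hEy
    have hy' : -2 * y ^ 2 + 4 * y + 2 = 3 * b := by linear_combination hEy
    refine subset_triple_ncard_le (s := S) (a := y) (b := 2 - y) (c := (3 * b - 2) / 4) ?_
    intro z hz
    have hEz := master z hz
    simp only [Set.mem_insert_iff, Set.mem_singleton_iff]
    rcases tri (z + 1) with h1 | h1 | h1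
    · -- z = -1
      have hz1 : z = -1 := by
        have := quadraticChar_eq_zero_iff.mp h1
        linear_combination this
      rw [hz1] at hEz
      rw [show (-1 : F) + 1 = 0 by ring, quadraticChar_zero, sqm1] at hEz
      push_cast at hEz
      have hb : 3 * b = -2 := by linear_combination -hEz
      right; right
      rw [eq_div_iff h4, hz1]
      linear_combination -hb
    · rcases tri z with h0 | h0 | h0
      · -- z = 0
        have hz0 : z = 0 := quadraticChar_eq_zero_iff.mp h0
        rw [hz0, show (0 : F) + 1 = 1 by ring, map_one, quadraticChar_zero] at hEz
        push_cast at hEz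
        have hb : 3 * b = 4 := by linear_combination -hEz
        -- then y must satisfy (y-1)^2 = 0, so y = 1, but then η(y+1) = η(2) = 1 ≠ -1
        exfalso
        have hy1'' : (2:F) * ((y - 1) ^ 2) = 0 := by linear_combination -hy' - hb
        have hy1' : (y - 1) ^ 2 = 0 := (mul_eq_zero.mp hy1'').resolve_left h2
        have : y = 1 := by
          have := pow_eq_zero_iff (n := 2) (by norm_num) |>.mp hy1'
          linear_combination this
        rw [this, show (1 : F) + 1 = 2 by norm_num, sq2] at hy2
        exact absurd hy2 (by norm_num)
      · -- A-type: η(z)=1, η(z+1)=1 : impossible alongside D-type y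
        exfalso
        rw [h0, h1] at hEz
        push_cast at hEz
        have hz' : 8 * z + 4 = 3 * b := by linear_combination hEz
        have key : (8 : F) * z = -1 * (2 * (y - 1) ^ 2) := by
          linear_combination hz' - hy'
        have hcast := congrArg (quadraticChar F) key
        have hyne : y - 1 ≠ 0 := by
          intro h
          have : z = 0 := by
            have h8z : (8:F) * z = 0 := by rw [key, h]; ring
            exact (mul_eq_zero.mp h8z).resolve_left h8f
          exact nz_of_one z h0 this
        rw [show (8:F) * z = 8 * z from rfl] at hcast
        rw [map_mul, map_mul, map_mul, sq8, h0, sqm1, sq2,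
          quadraticChar_sq_one' hyne] at hcast
        norm_num at hcast
      · -- C-type: η(z)=-1, η(z+1)=1 : impossible alongside D-type y
        exfalso
        rw [h0, h1] at hEz
        push_cast at hEz
        have hz' : 2 * z ^ 2 + 8 * z + 4 = 3 * b := by linear_combination hEz
        -- circle identity : 2*(z-y+1)^2 = 4*((-1*z)*(y+1))
        have hid : 2 * (z - y + 1) ^ 2 = 4 * ((-1 * z) * (y + 1)) := by
          linear_combination hz' - hy'
        have hz0 : z ≠ 0 := nz_of_neg z h0
        have hy10 : y + 1 ≠ 0 := nz_of_neg (y + 1) hy2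
        have hw : z - y + 1 ≠ 0 := by
          intro h
          have h40 : (4 : F) * ((-1 * z) * (y + 1)) = 0 := by
            rw [← hid, h]; ring
          rcases mul_eq_zero.mp ((mul_eq_zero.mp h40).resolve_left h4) with h' | h'
          · exact hz0 (by linear_combination -h')
          · exact hy10 h'
        have hcast := congrArg (quadraticChar F) hid
        rw [map_mul, map_mul, map_mul, map_mul, sq2, sq4, sqm1, h0, hy2,
          quadraticChar_sq_one' hw] at hcast
        norm_num at hcast
    · rcases tri z with h0 | h0 | h0
      · -- z = 0 but η(z+1) = -1 : contradiction since η(1) = 1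
        exfalso
        have hz0 : z = 0 := quadraticChar_eq_zero_iff.mp h0
        rw [hz0, show (0 : F) + 1 = 1 by ring, map_one] at h1
        exact absurd h1 (by norm_num)
      · -- D-type: z = y or z = 2 - y
        rw [h0, h1] at hEz
        push_cast at hEz
        have hz' : -2 * z ^ 2 + 4 * z + 2 = 3 * b := by linear_combination hEz
        have h2f : (2:F) * ((z - y) * (z + y - 2)) = 0 := by
          linear_combination -hz' + hy'
        rcases mul_eq_zero.mp ((mul_eq_zero.mp h2f).resolve_left h2) with h | h
        · left; linear_combination h
        · right; left; linear_combination h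
      · -- B-type: z = (3b-2)/4
        rw [h0, h1] at hEz
        push_cast at hEz
        have hz' : 4 * z + 2 = 3 * b := by linear_combination hEz
        right; right
        rw [eq_div_iff h4]
        linear_combination hz'
  · by_cases hC : ∃ y, y ∈ S ∧ quadraticChar F y = -1 ∧ quadraticChar F (y + 1) = 1
    · -- a C-type solution exists (and no D-type)
      obtain ⟨y, hyS, hy1, hy2⟩ := hC
      have hEy := master y hyS
      rw [hy1, hy2] at hEy
      push_cast at hEy
      have hy' : 2 * y ^ 2 + 8 * y + 4 = 3 * b := by linear_combination hEy
      by_cases hA : ∃ w, w ∈ S ∧ quadraticChar F w = 1 ∧ quadraticChar F (w + 1) = 1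
      · -- an A-type solution w exists : second C-root excluded
        obtain ⟨w, hwS, hw1, hw2⟩ := hA
        have hEw := master w hwS
        rw [hw1, hw2] at hEw
        push_cast at hEw
        have hw' : 8 * w + 4 = 3 * b := by linear_combination hEw
        refine subset_triple_ncard_le (s := S) (a := y) (b := w) (c := (3 * b - 2) / 4) ?_
        intro z hz
        have hEz := master z hz
        simp only [Set.mem_insert_iff, Set.mem_singleton_iff]
        rcases tri (z + 1) with h1 | h1 | h1
        · -- z = -1 : 3b = -2, contradiction with C-type witness
          exfalso
          have hz1 : z = -1 := by
            have := quadraticChar_eq_zero_iff.mp h1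
            linear_combination this
          rw [hz1] at hEz
          rw [show (-1 : F) + 1 = 0 by ring, quadraticChar_zero, sqm1] at hEz
          push_cast at hEz
          have hb : 3 * b = -2 := by linear_combination -hEz
          have hyy : (2:F) * ((y + 1) * (y + 3)) = 0 := by
            linear_combination hy' + hb
          rcases mul_eq_zero.mp ((mul_eq_zero.mp hyy).resolve_left h2) with h | h
          · exact nz_of_one (y + 1) hy2 h
          · have : y + 1 = -2 := by linear_combination h
            rw [this, show (-2 : F) = -1 * 2 by ring, map_mul, sqm1, sq2] at hy2
            exact absurd hy2 (by norm_num)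
        · rcases tri z with h0 | h0 | h0
          · -- z = 0 : 3b = 4 then w = 0 contradiction
            exfalso
            have hz0 : z = 0 := quadraticChar_eq_zero_iff.mp h0
            rw [hz0, show (0 : F) + 1 = 1 by ring, map_one, quadraticChar_zero] at hEz
            push_cast at hEz
            have hb : 3 * b = 4 := by linear_combination -hEz
            have : (8 : F) * w = 0 := by linear_combination hw' + hb
            have hw0 : w = 0 := (mul_eq_zero.mp this).resolve_left h8f
            exact nz_of_one w hw1 hw0
          · -- A-type: z = w
            rw [h0, h1] at hEz
            push_cast at hEz
            have hz' : 8 * z + 4 = 3 * b := by linear_combination hEz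
            right; left
            have : (8 : F) * (z - w) = 0 := by linear_combination hz' - hw'
            have := (mul_eq_zero.mp this).resolve_left h8f
            linear_combination this
          · -- C-type: z = y or z = -4 - y; the latter contradicts A-witness w
            rw [h0, h1] at hEz
            push_cast at hEz
            have hz' : 2 * z ^ 2 + 8 * z + 4 = 3 * b := by linear_combination hEz
            have hfac : (2:F) * ((z - y) * (z + y + 4)) = 0 := by
              linear_combination hz' - hy'
            rcases mul_eq_zero.mp ((mul_eq_zero.mp hfac).resolve_left h2) with h | h
            · left; linear_combination h
            · exfalso
              -- z = -4 - y, so y + 4 = -z ; 8w = 2*y*(y+4)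
              have key : (8 : F) * w = 2 * (y * (-1 * z)) := by
                linear_combination hw' - hy' + 2 * y * h
              have hcast := congrArg (quadraticChar F) key
              rw [map_mul, map_mul, map_mul, map_mul, sq8, hw1, sq2, sqm1, hy1, h0] at hcast
              norm_num at hcast
        · rcases tri z with h0 | h0 | h0
          · exfalso
            have hz0 : z = 0 := quadraticChar_eq_zero_iff.mp h0
            rw [hz0, show (0 : F) + 1 = 1 by ring, map_one] at h1
            exact absurd h1 (by norm_num)
          · -- D-type: contradicts hD
            exact absurd ⟨z, hz, h0, h1⟩ hD
          · -- B-type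
            rw [h0, h1] at hEz
            push_cast at hEz
            have hz' : 4 * z + 2 = 3 * b := by linear_combination hEz
            right; right
            rw [eq_div_iff h4]
            linear_combination hz'
      · -- no A-type solution
        refine subset_triple_ncard_le (s := S) (a := y) (b := -4 - y) (c := (3 * b - 2) / 4) ?_
        intro z hz
        have hEz := master z hz
        simp only [Set.mem_insert_iff, Set.mem_singleton_iff]
        rcases tri (z + 1) with h1 | h1 | h1
        · -- z = -1 : contradiction with C-witness (as above)
          exfalso
          have hz1 : z = -1 := by
            have := quadraticChar_eq_zero_iff.mp h1
            linear_combination this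
          rw [hz1] at hEz
          rw [show (-1 : F) + 1 = 0 by ring, quadraticChar_zero, sqm1] at hEz
          push_cast at hEz
          have hb : 3 * b = -2 := by linear_combination -hEz
          have hyy : (2:F) * ((y + 1) * (y + 3)) = 0 := by
            linear_combination hy' + hb
          rcases mul_eq_zero.mp ((mul_eq_zero.mp hyy).resolve_left h2) with h | h
          · exact nz_of_one (y + 1) hy2 h
          · have : y + 1 = -2 := by linear_combination h
            rw [this, show (-2 : F) = -1 * 2 by ring, map_mul, sqm1, sq2] at hy2
            exact absurd hy2 (by norm_num)
        · rcases tri z with h0 | h0 | h0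
          · -- z = 0 : 3b = 4, then y(y+4)=0, y = -4, and z = 0 = -4 - y
            have hz0 : z = 0 := quadraticChar_eq_zero_iff.mp h0
            rw [hz0, show (0 : F) + 1 = 1 by ring, map_one, quadraticChar_zero] at hEz
            push_cast at hEz
            have hb : 3 * b = 4 := by linear_combination -hEz
            have hyy : (2:F) * (y * (y + 4)) = 0 := by
              linear_combination hy' + hb
            rcases mul_eq_zero.mp ((mul_eq_zero.mp hyy).resolve_left h2) with h | h
            · exact absurd h (nz_of_neg y hy1)
            · right; left
              rw [hz0]
              linear_combination h
          · -- A-type: contradicts hA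
            exact absurd ⟨z, hz, h0, h1⟩ hA
          · -- C-type: z = y or z = -4 - y
            rw [h0, h1] at hEz
            push_cast at hEz
            have hz' : 2 * z ^ 2 + 8 * z + 4 = 3 * b := by linear_combination hEz
            have hfac : (2:F) * ((z - y) * (z + y + 4)) = 0 := by
              linear_combination hz' - hy'
            rcases mul_eq_zero.mp ((mul_eq_zero.mp hfac).resolve_left h2) with h | h
            · left; linear_combination h
            · right; left; linear_combination h
        · rcases tri z with h0 | h0 | h0
          · exfalso
            have hz0 : z = 0 := quadraticChar_eq_zero_iff.mp h0
            rw [hz0, show (0 : F) + 1 = 1 by ring, map_one] at h1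
            exact absurd h1 (by norm_num)
          · exact absurd ⟨z, hz, h0, h1⟩ hD
          · rw [h0, h1] at hEz
            push_cast at hEz
            have hz' : 4 * z + 2 = 3 * b := by linear_combination hEz
            right; right
            rw [eq_div_iff h4]
            linear_combination hz'
    · -- neither C-type nor D-type solutions
      refine subset_triple_ncard_le (s := S) (a := (3 * b - 4) / 8) (b := (3 * b - 2) / 4)
        (c := 0) ?_
      intro z hz
      have hEz := master z hz
      simp only [Set.mem_insert_iff, Set.mem_singleton_iff]
      rcases tri (z + 1) with h1 | h1 | h1
      · -- z = -1 : 3b = -2 and z = (3b-2)/4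
        have hz1 : z = -1 := by
          have := quadraticChar_eq_zero_iff.mp h1
          linear_combination this
        rw [hz1] at hEz
        rw [show (-1 : F) + 1 = 0 by ring, quadraticChar_zero, sqm1] at hEz
        push_cast at hEz
        have hb : 3 * b = -2 := by linear_combination -hEz
        right; left
        rw [eq_div_iff h4, hz1]
        linear_combination -hb
      · rcases tri z with h0 | h0 | h0
        · -- z = 0
          right; right
          exact quadraticChar_eq_zero_iff.mp h0
        · -- A-type
          rw [h0, h1] at hEz
          push_cast at hEz
          have hz' : 8 * z + 4 = 3 * b := by linear_combination hEz
          left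
          rw [eq_div_iff h8f]
          linear_combination hz'
        · exact absurd ⟨z, hz, h0, h1⟩ hC
      · rcases tri z with h0 | h0 | h0
        · exfalso
          have hz0 : z = 0 := quadraticChar_eq_zero_iff.mp h0
          rw [hz0, show (0 : F) + 1 = 1 by ring, map_one] at h1
          exact absurd h1 (by norm_num)
        · exact absurd ⟨z, hz, h0, h1⟩ hD
        · rw [h0, h1] at hEz
          push_cast at hEz
          have hz' : 4 * z + 2 = 3 * b := by linear_combination hEz
          right; left
          rw [eq_div_iff h4]
          linear_combination hz'
end

section
/- Let q be an odd prime power with q ≡ 3 (mod 4), let η be the quadratic character of F_q, and define F(x) = x^2(1 + η(x)). Then for every b ∈ F_q^*, the system F(x) - F(y) = b, F(x+1) - F(y+1) = b has at most 2 solutions (x,y) ∈ F_q^2; i.e., the boomerang uniformity of F at a = 1 is at most 2. -/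
section Aux

variable {F : Type*} [Field F] [Fintype F] [DecidableEq F]

private lemma aux_two_ne_zero (hodd : Odd (Fintype.card F)) : (2 : F) ≠ 0 := by
  refine Ring.two_ne_zero fun h => ?_
  have := (FiniteField.even_card_iff_char_two (F := F)).mp h
  have := Nat.odd_iff.mp hodd
  omega

private lemma aux_neg_one_not_square (h4 : Fintype.card F % 4 = 3) :
    ¬ IsSquare (-1 : F) := by
  simp [FiniteField.isSquare_neg_one_iff, h4]

private lemma aux_Fval (x : F) :
    x ^ 2 * (1 + ((quadraticChar F x : ℤ) : F)) =
      if IsSquare x ∧ x ≠ 0 then 2 * x ^ 2 else 0 := by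
  by_cases hx : x = 0
  · subst hx; simp
  by_cases hs : IsSquare x
  · rw [if_pos ⟨hs, hx⟩, (quadraticChar_one_iff_isSquare hx).mpr hs]
    push_cast; ring
  · rw [if_neg (by tauto), quadraticChar_neg_one_iff_not_isSquare.mpr hs]
    push_cast; ring

private lemma aux_no_neg (hm1 : ¬ IsSquare (-1 : F)) {s t : F} (ht : t ≠ 0)
    (h : s ^ 2 = -t ^ 2) : False := by
  refine hm1 ⟨s * t⁻¹, ?_⟩
  field_simp
  linear_combination -h

private lemma aux_uniq (hm1 : ¬ IsSquare (-1 : F)) {s t : F}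
    (hs : IsSquare s ∧ s ≠ 0) (ht : IsSquare t ∧ t ≠ 0) (h : s ^ 2 = t ^ 2) :
    s = t := by
  have h0 : (s - t) * (s + t) = 0 := by linear_combination h
  rcases mul_eq_zero.mp h0 with h1 | h1
  · exact sub_eq_zero.mp h1
  · exfalso
    have hst : s = -t := eq_neg_of_add_eq_zero_left h1
    refine hm1 ?_
    have : (-1 : F) = s * t⁻¹ := by rw [hst, neg_mul, mul_inv_cancel₀ ht.2]
    rw [this]
    exact hs.1.mul (ht.1.inv)

end Aux

set_option maxHeartbeats 1000000 in
/-- for `F(x) = x^2 (1 + η(x))` and every `b ≠ 0`, the boomerang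
system at `a = 1` has at most `2` solutions. -/
theorem stmt_18 {F : Type*} [Field F] [Fintype F] [DecidableEq F]
    (hodd : Odd (Fintype.card F)) (h4 : Fintype.card F % 4 = 3) :
    ∀ b : F, b ≠ 0 →
      {p : F × F |
        p.1 ^ 2 * (1 + ((quadraticChar F p.1 : ℤ) : F))
          - p.2 ^ 2 * (1 + ((quadraticChar F p.2 : ℤ) : F)) = b ∧
        (p.1 + 1) ^ 2 * (1 + ((quadraticChar F (p.1 + 1) : ℤ) : F))
          - (p.2 + 1) ^ 2 * (1 + ((quadraticChar F (p.2 + 1) : ℤ) : F)) = b}.ncard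
        ≤ 2 := by
  classical
  intro b hb
  have h2 : (2 : F) ≠ 0 := aux_two_ne_zero hodd
  have hm1 : ¬ IsSquare (-1 : F) := aux_neg_one_not_square h4
  set Q : F → Prop := fun z => IsSquare z ∧ z ≠ 0 with hQ
  set S : Set (F × F) :=
    {p : F × F |
        p.1 ^ 2 * (1 + ((quadraticChar F p.1 : ℤ) : F))
          - p.2 ^ 2 * (1 + ((quadraticChar F p.2 : ℤ) : F)) = b ∧
        (p.1 + 1) ^ 2 * (1 + ((quadraticChar F (p.1 + 1) : ℤ) : F))
          - (p.2 + 1) ^ 2 * (1 + ((quadraticChar F (p.2 + 1) : ℤ) : F)) = b} with hS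
  have hmem : ∀ p : F × F, p ∈ S ↔
      ((if Q p.1 then 2 * p.1 ^ 2 else 0) - (if Q p.2 then 2 * p.2 ^ 2 else 0) = b ∧
       (if Q (p.1 + 1) then 2 * (p.1 + 1) ^ 2 else 0)
         - (if Q (p.2 + 1) then 2 * (p.2 + 1) ^ 2 else 0) = b) := by
    intro p
    rw [hS, Set.mem_setOf_eq, aux_Fval p.1, aux_Fval p.2, aux_Fval (p.1 + 1),
      aux_Fval (p.2 + 1)]
  -- the four possible shapes of a solution
  have shape : ∀ p : F × F, p ∈ S →
      (Q p.1 ∧ Q p.2 ∧ Q (p.1 + 1) ∧ 2 * (p.1 + 1) ^ 2 = b ∧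
        2 * p.1 ^ 2 - 2 * p.2 ^ 2 = b) ∨
      (Q p.1 ∧ Q p.2 ∧ Q (p.2 + 1) ∧ -(2 * (p.2 + 1) ^ 2) = b ∧
        2 * p.1 ^ 2 - 2 * p.2 ^ 2 = b) ∨
      (Q p.1 ∧ ¬ Q p.2 ∧ Q (p.2 + 1) ∧ 2 * p.1 ^ 2 = b ∧
        (p.2 + 1) ^ 2 = 2 * p.1 + 1) ∨
      (¬ Q p.1 ∧ Q p.2 ∧ Q (p.1 + 1) ∧ -(2 * p.2 ^ 2) = b ∧
        (p.1 + 1) ^ 2 = 2 * p.2 + 1) := by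
    intro p hp
    obtain ⟨e1, e2⟩ := (hmem p).mp hp
    set x := p.1
    set y := p.2
    by_cases qx : Q x <;> by_cases qy : Q y
    · -- eq1 type A
      rw [if_pos qx, if_pos qy] at e1
      by_cases qx1 : Q (x + 1) <;> by_cases qy1 : Q (y + 1)
      · -- A,A : contradiction
        exfalso
        rw [if_pos qx1, if_pos qy1] at e2
        have hxy : x - y = 0 := by
          apply mul_left_cancel₀ (mul_ne_zero h2 h2)
          rw [mul_zero]
          linear_combination e2 - e1
        apply hb
        rw [← e1]
        have : x = y := sub_eq_zero.mp hxy
        rw [this]; ring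
      · rw [if_pos qx1, if_neg qy1] at e2
        exact Or.inl ⟨qx, qy, qx1, by linear_combination e2, e1⟩
      · rw [if_neg qx1, if_pos qy1] at e2
        exact Or.inr (Or.inl ⟨qx, qy, qy1, by linear_combination e2, e1⟩)
      · exfalso; rw [if_neg qx1, if_neg qy1] at e2
        exact hb (by linear_combination -e2)
    · -- eq1 type B : 2 x^2 = b
      rw [if_pos qx, if_neg qy] at e1
      by_cases qx1 : Q (x + 1) <;> by_cases qy1 : Q (y + 1)
      · rw [if_pos qx1, if_pos qy1] at e2
        refine Or.inr (Or.inr (Or.inl ⟨qx, qy, qy1, by linear_combination e1, ?_⟩))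
        apply mul_left_cancel₀ h2
        linear_combination e1 - e2
      · exfalso
        rw [if_pos qx1, if_neg qy1] at e2
        have hsq : (x + 1) ^ 2 = x ^ 2 := by
          apply mul_left_cancel₀ h2
          linear_combination e2 - e1
        have := aux_uniq hm1 qx1 qx hsq
        simp at this
      · exfalso
        rw [if_neg qx1, if_pos qy1] at e2
        refine aux_no_neg hm1 qy1.2 (s := x) ?_
        apply mul_left_cancel₀ h2
        linear_combination e1 - e2
      · exfalso; rw [if_neg qx1, if_neg qy1] at e2
        exact hb (by linear_combination -e2)
    · -- eq1 type C : -(2 y^2) = b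
      rw [if_neg qx, if_pos qy] at e1
      by_cases qx1 : Q (x + 1) <;> by_cases qy1 : Q (y + 1)
      · rw [if_pos qx1, if_pos qy1] at e2
        refine Or.inr (Or.inr (Or.inr ⟨qx, qy, qx1, by linear_combination e1, ?_⟩))
        apply mul_left_cancel₀ h2
        linear_combination e2 - e1
      · exfalso
        rw [if_pos qx1, if_neg qy1] at e2
        refine aux_no_neg hm1 qy.2 (s := x + 1) ?_
        apply mul_left_cancel₀ h2
        linear_combination e2 - e1
      · exfalso
        rw [if_neg qx1, if_pos qy1] at e2
        have hsq : (y + 1) ^ 2 = y ^ 2 := by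
          apply mul_left_cancel₀ h2
          linear_combination e1 - e2
        have := aux_uniq hm1 qy1 qy hsq
        simp at this
      · exfalso; rw [if_neg qx1, if_neg qy1] at e2
        exact hb (by linear_combination -e2)
    · exfalso
      rw [if_neg qx, if_neg qy] at e1
      exact hb (by linear_combination -e1)
  -- two solutions with the same "both-squares" flag coincide
  have key : ∀ p ∈ S, ∀ q ∈ S, ((Q p.1 ∧ Q p.2) ↔ (Q q.1 ∧ Q q.2)) → p = q := by
    intro p hp q hq hd
    rcases shape p hp with ⟨qx, qy, qx1, hb1, he1⟩ | ⟨qx, qy, qy1, hb1, he1⟩ |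
        ⟨qx, qy, qy1, hb1, he1⟩ | ⟨qx, qy, qx1, hb1, he1⟩ <;>
      rcases shape q hq with ⟨qx', qy', qx1', hb1', he1'⟩ | ⟨qx', qy', qy1', hb1', he1'⟩ |
        ⟨qx', qy', qy1', hb1', he1'⟩ | ⟨qx', qy', qx1', hb1', he1'⟩
    · -- S1 S1
      have hx : p.1 = q.1 := by
        have : p.1 + 1 = q.1 + 1 := by
          refine aux_uniq hm1 qx1 qx1' (mul_left_cancel₀ h2 ?_)
          linear_combination hb1 - hb1'
        exact add_right_cancel this
      have hy : p.2 = q.2 := by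
        rw [hx] at he1
        refine aux_uniq hm1 qy qy' (mul_left_cancel₀ h2 ?_)
        linear_combination he1' - he1
      exact Prod.ext hx hy
    · -- S1 S2 : contradiction
      exact absurd (mul_left_cancel₀ h2
        (show (2:F) * (p.1 + 1) ^ 2 = 2 * -(q.2 + 1) ^ 2 by
          linear_combination hb1 - hb1')) (fun h => aux_no_neg hm1 qy1'.2 h)
    · exact absurd (hd.mp ⟨qx, qy⟩).2 qy'
    · exact absurd (hd.mp ⟨qx, qy⟩).1 qx'
    · -- S2 S1
      exact absurd (mul_left_cancel₀ h2
        (show (2:F) * (q.1 + 1) ^ 2 = 2 * -(p.2 + 1) ^ 2 by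
          linear_combination hb1' - hb1)) (fun h => aux_no_neg hm1 qy1.2 h)
    · -- S2 S2
      have hy : p.2 = q.2 := by
        have : p.2 + 1 = q.2 + 1 := by
          refine aux_uniq hm1 qy1 qy1' (mul_left_cancel₀ h2 ?_)
          linear_combination hb1' - hb1
        exact add_right_cancel this
      have hx : p.1 = q.1 := by
        rw [hy] at he1
        refine aux_uniq hm1 qx qx' (mul_left_cancel₀ h2 ?_)
        linear_combination he1 - he1'
      exact Prod.ext hx hy
    · exact absurd (hd.mp ⟨qx, qy⟩).2 qy'
    · exact absurd (hd.mp ⟨qx, qy⟩).1 qx'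
    · exact absurd (hd.mpr ⟨qx', qy'⟩).2 qy
    · exact absurd (hd.mpr ⟨qx', qy'⟩).2 qy
    · -- S3 S3
      have hx : p.1 = q.1 := by
        refine aux_uniq hm1 qx qx' (mul_left_cancel₀ h2 ?_)
        linear_combination hb1 - hb1'
      have hy : p.2 = q.2 := by
        have : p.2 + 1 = q.2 + 1 := by
          refine aux_uniq hm1 qy1 qy1' ?_
          rw [he1, he1', hx]
        exact add_right_cancel this
      exact Prod.ext hx hy
    · -- S3 S4 : contradiction
      exact absurd (mul_left_cancel₀ h2
        (show (2:F) * p.1 ^ 2 = 2 * -q.2 ^ 2 by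
          linear_combination hb1 - hb1')) (fun h => aux_no_neg hm1 qy'.2 h)
    · exact absurd (hd.mpr ⟨qx', qy'⟩).1 qx
    · exact absurd (hd.mpr ⟨qx', qy'⟩).1 qx
    · -- S4 S3
      exact absurd (mul_left_cancel₀ h2
        (show (2:F) * q.1 ^ 2 = 2 * -p.2 ^ 2 by
          linear_combination hb1' - hb1)) (fun h => aux_no_neg hm1 qy.2 h)
    · -- S4 S4
      have hy : p.2 = q.2 := by
        refine aux_uniq hm1 qy qy' (mul_left_cancel₀ h2 ?_)
        linear_combination hb1' - hb1
      have hx : p.1 = q.1 := by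
        have : p.1 + 1 = q.1 + 1 := by
          refine aux_uniq hm1 qx1 qx1' ?_
          rw [he1, he1', hy]
        exact add_right_cancel this
      exact Prod.ext hx hy
  -- conclude via the injection into Bool
  let g : F × F → Bool := fun p => decide (Q p.1 ∧ Q p.2)
  have hinj : Set.InjOn g S := by
    intro p hp q hq hg
    refine key p hp q hq ?_
    simp only [g] at hg
    exact decide_eq_decide.mp hg
  calc S.ncard = (g '' S).ncard := (Set.ncard_image_of_injOn hinj).symm
    _ ≤ (Set.univ : Set Bool).ncard :=
        Set.ncard_le_ncard (Set.subset_univ _) Set.finite_univ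
    _ = 2 := by simp [Set.ncard_univ]
end

section
/- Let q be an odd prime power with q ≡ 3 (mod 4) and q > 7, let η be the quadratic character of F_q, and define F(x) = x^2(1 + η(x)). Let T = Σ_{y ∈ F_q} η((y+1)(y^2+1)). Then the differential spectrum of F satisfies: ω_{(q+1)/4} = q - 1, ω_2 = (q-1)(q + 1 + (η(2)-1)T)/8, ω_1 = (q-1)(2q - 2 + (1-η(2))T)/4, and ω_0 = (q-1)(3q - 5 + (η(2)-1)T)/8, where ω_i = #{(a,b) ∈ F_q^* × F_q : δ_F(a,b) = i}. -/
open Finset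

section Aux
variable {F : Type*} [Field F] [Fintype F] [DecidableEq F]

local notation "χ" => quadraticChar F
local notation "q" => Fintype.card F

lemma chi_neg (hm1 : χ (-1) = -1) (x : F) : χ (-x) = - χ x := by
  have : (-x : F) = -1 * x := by ring
  rw [this, map_mul, hm1]; ring

lemma chi_mul_sq (z : F) {w : F} (hw : w ≠ 0) : χ (z * w ^ 2) = χ z := by
  rw [map_mul, quadraticChar_sq_one' hw, mul_one]

lemma jacobi (hc : ringChar F ≠ 2) {a : F} (ha : a ≠ 0) :
    ∑ x : F, χ (x * (x + a)) = -1 := by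
  have h1 : ∑ x : F, χ (x * (x + a)) = ∑ x ∈ univ.erase (0 : F), χ (x * (x + a)) := by
    rw [← Finset.sum_erase_add _ _ (mem_univ (0 : F))]
    simp
  have h2 : ∑ x ∈ univ.erase (0 : F), χ (x * (x + a))
      = ∑ u ∈ univ.erase (1 : F), χ u := by
    refine Finset.sum_nbij' (fun x => 1 + a * x⁻¹) (fun u => a * (u - 1)⁻¹) ?_ ?_ ?_ ?_ ?_
    · intro x hx
      simp only [mem_erase, mem_univ, and_true] at hx ⊢
      intro h
      have : a * x⁻¹ = 0 := by linear_combination h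
      rcases mul_eq_zero.mp this with h' | h'
      · exact ha h'
      · exact hx (inv_eq_zero.mp h')
    · intro u hu
      simp only [mem_erase, mem_univ, and_true] at hu ⊢
      intro h
      rcases mul_eq_zero.mp h with h' | h'
      · exact ha h'
      · exact hu (sub_eq_zero.mp (inv_eq_zero.mp h'))
    · intro x hx
      simp only [mem_erase, mem_univ, and_true] at hx
      field_simp
      simp [ha]
    · intro u hu
      simp only [mem_erase, mem_univ, and_true] at hu
      have : u - 1 ≠ 0 := sub_ne_zero.mpr hu
      field_simp
      ring
    · intro x hx
      simp only [mem_erase, mem_univ, and_true] at hx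
      have : x * (x + a) = (1 + a * x⁻¹) * x ^ 2 := by field_simp
      rw [this, chi_mul_sq _ hx]
  rw [h1, h2]
  have h3 := quadraticChar_sum_zero hc
  rw [← Finset.sum_erase_add _ _ (mem_univ (1 : F))] at h3
  simp only [map_one] at h3
  linarith


lemma jacobi' (hc : ringChar F ≠ 2) {c d : F} (hcd : c ≠ d) :
    ∑ x : F, χ ((x + c) * (x + d)) = -1 := by
  have key : ∑ y : F, χ (y * (y + (d - c))) = -1 :=
    jacobi hc (sub_ne_zero.mpr (Ne.symm hcd))
  rw [← key]
  refine Fintype.sum_equiv (Equiv.addRight c) _ _ ?_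
  intro y
  congr 1
  simp only [Equiv.coe_addRight]
  ring

lemma sum_shift_zero (hc : ringChar F ≠ 2) (a : F) : ∑ x : F, χ (x + a) = 0 := by
  have := quadraticChar_sum_zero hc
  rw [← this]
  exact Fintype.sum_equiv (Equiv.addRight a) _ _ (fun y => by simp)

lemma odd_sum (hm1 : χ (-1) = -1) (f : F → F) (hf : ∀ t, f (-t) = - f t) :
    ∑ t : F, χ (f t) = 0 := by
  have h : ∑ t : F, χ (f t) = ∑ t : F, χ (f (-t)) :=
    (Fintype.sum_equiv (Equiv.neg F) _ _ (fun y => by simp)).symm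
  have h2 : ∑ t : F, χ (f (-t)) = - ∑ t : F, χ (f t) := by
    rw [← Finset.sum_neg_distrib]
    exact Finset.sum_congr rfl (fun t _ => by rw [hf, chi_neg hm1])
  linarith


lemma sq_fiber (hc : ringChar F ≠ 2) (g : F → ℤ) :
    ∑ t : F, g (t ^ 2) = ∑ s : F, (χ s + 1) * g s := by
  rw [← Finset.sum_fiberwise_of_maps_to
    (fun (t : F) (_ : t ∈ (univ : Finset F)) => mem_univ (t ^ 2)) (fun t => g (t ^ 2))]
  refine Finset.sum_congr rfl (fun s _ => ?_)
  have hcard : ((univ.filter (fun t : F => t ^ 2 = s)).card : ℤ) = χ s + 1 := by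
    rw [← quadraticChar_card_sqrts hc s]
    congr 1
    rw [Set.toFinset_setOf]
  calc ∑ t ∈ univ.filter (fun t : F => t ^ 2 = s), g (t ^ 2)
      = ∑ t ∈ univ.filter (fun t : F => t ^ 2 = s), g s := by
        refine Finset.sum_congr rfl (fun t ht => ?_)
        rw [(Finset.mem_filter.mp ht).2]
    _ = ((univ.filter (fun t : F => t ^ 2 = s)).card : ℤ) * g s := by
        rw [Finset.sum_const, nsmul_eq_mul]
    _ = (χ s + 1) * g s := by rw [hcard]

lemma inv_reindex (f g : F → ℤ) (h : ∀ t : F, t ≠ 0 → f t⁻¹ = g t) :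
    ∑ t ∈ univ.erase (0 : F), f t = ∑ t ∈ univ.erase (0 : F), g t := by
  refine Finset.sum_nbij' (fun t => t⁻¹) (fun t => t⁻¹) ?_ ?_ ?_ ?_ ?_
  · intro t ht; simp only [mem_erase, mem_univ, and_true] at ht ⊢; exact inv_ne_zero ht
  · intro t ht; simp only [mem_erase, mem_univ, and_true] at ht ⊢; exact inv_ne_zero ht
  · intro t ht; simp only [mem_erase, mem_univ, and_true] at ht; exact inv_inv t
  · intro t ht; simp only [mem_erase, mem_univ, and_true] at ht; exact inv_inv t
  · intro t ht
    simp only [mem_erase, mem_univ, and_true] at ht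
    have := h t⁻¹ (inv_ne_zero ht)
    rwa [inv_inv] at this

lemma two_sq_card (hc : ringChar F ≠ 2) :
    2 * ((univ.filter (fun u : F => χ u = 1)).card : ℤ) = q - 1 := by
  have h0 := quadraticChar_sum_zero hc
  have h1 : ∑ x : F, χ x = ((univ.filter (fun u : F => χ u = 1)).card : ℤ)
      - ((univ.filter (fun u : F => χ u = -1)).card : ℤ) := by
    rw [Finset.card_filter, Finset.card_filter]
    push_cast
    rw [← Finset.sum_sub_distrib]
    refine Finset.sum_congr rfl (fun x _ => ?_)
    rcases eq_or_ne x 0 with rfl | hx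
    · simp [quadraticChar_zero]
    · rcases quadraticChar_dichotomy hx with h | h <;> rw [h] <;> norm_num
  have h2 : ((univ.filter (fun u : F => χ u = 1)).card : ℤ)
      + ((univ.filter (fun u : F => χ u = -1)).card : ℤ) = q - 1 := by
    have : (univ.filter (fun u : F => χ u = 1)) ∪ (univ.filter (fun u : F => χ u = -1))
        = univ.erase (0 : F) := by
      ext x
      simp only [mem_union, mem_filter, mem_univ, true_and, mem_erase, and_true]
      constructor
      · rintro (h | h) rfl <;> rw [quadraticChar_zero] at h <;> omega
      · intro hx; exact quadraticChar_dichotomy hx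
    have hdisj : Disjoint (univ.filter (fun u : F => χ u = 1))
        (univ.filter (fun u : F => χ u = -1)) := by
      rw [Finset.disjoint_filter]
      intro x _ h1 h2
      rw [h1] at h2; omega
    have hcard := Finset.card_union_of_disjoint hdisj
    rw [this, Finset.card_erase_of_mem (mem_univ 0), Finset.card_univ] at hcard
    have hq : 1 ≤ Fintype.card F := Fintype.card_pos
    omega
  rw [h0] at h1
  linarith


lemma erase_sum_T (t0 : F) : ∑ t ∈ univ.erase (0:F), χ ((t+1)*(t^2+1))
    = (∑ y : F, χ ((y + 1) * (y ^ 2 + 1))) - 1 := by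
  have h := Finset.sum_erase_add univ (fun t : F => χ ((t+1)*(t^2+1))) (mem_univ (0:F))
  have h0 : χ (((0:F)+1)*((0:F)^2+1)) = 1 := by norm_num
  linarith

lemma tset_card (hc : ringChar F ≠ 2) (hm1 : χ (-1) = -1) :
    8 * ((univ.filter (fun t : F => χ (t-1) = 1 ∧ χ (2*t*(t+1)) = -1 ∧ χ (2*t*(t^2+1)) = 1)).card : ℤ)
      = q + 1 + (χ 2 - 1) * (∑ y : F, χ ((y + 1) * (y ^ 2 + 1))) := by
  have h2ne : (2:F) ≠ 0 := Ring.two_ne_zero hc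
  have hsq1 : ∀ t : F, t^2 + 1 ≠ 0 := by
    intro t h
    have ht : t ≠ 0 := by
      intro h'; rw [h'] at h; norm_num at h
    have : (-1 : F) = t^2 := by linear_combination -h
    rw [this, quadraticChar_sq_one' ht] at hm1
    norm_num at hm1
  set T := ∑ y : F, χ ((y + 1) * (y ^ 2 + 1)) with hTdef
  -- the eight component sums
  have hA : ∑ t : F, χ (t-1) = 0 := by
    have := sum_shift_zero hc (-1 : F)
    rw [← this]
    exact Finset.sum_congr rfl (fun t _ => by rw [sub_eq_add_neg])
  have hB : ∑ t : F, χ (2*t*(t+1)) = - χ 2 := by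
    have hj : ∑ t : F, χ (t*(t+1)) = -1 := jacobi hc one_ne_zero
    calc ∑ t : F, χ (2*t*(t+1)) = ∑ t : F, χ 2 * χ (t*(t+1)) := by
          refine Finset.sum_congr rfl (fun t _ => ?_)
          rw [← map_mul]; congr 1; ring
      _ = χ 2 * ∑ t : F, χ (t*(t+1)) := by rw [Finset.mul_sum]
      _ = - χ 2 := by rw [hj]; ring
  have hC : ∑ t : F, χ (2*t*(t^2+1)) = 0 :=
    odd_sum hm1 (fun t => 2*t*(t^2+1)) (fun t => by ring)
  have hD : ∑ t : F, χ ((t-1) * (2*t*(t+1))) = 0 :=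
    odd_sum hm1 (fun t => (t-1) * (2*t*(t+1))) (fun t => by ring)
  have hU : ∑ t : F, χ (t*((t+1)*(t^2+1))) = T - 1 := by
    have h0 : ∑ t : F, χ (t*((t+1)*(t^2+1)))
        = ∑ t ∈ univ.erase (0:F), χ (t*((t+1)*(t^2+1))) := by
      have h := Finset.sum_erase_add univ (fun t : F => χ (t*((t+1)*(t^2+1)))) (mem_univ (0:F))
      have : χ ((0:F)*(((0:F)+1)*((0:F)^2+1))) = 0 := by
        rw [zero_mul]; exact quadraticChar_zero
      linarith
    have hinv : ∀ t : F, t ≠ 0 → χ (t⁻¹*((t⁻¹+1)*((t⁻¹)^2+1))) = χ ((t+1)*(t^2+1)) := by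
      intro t ht
      have harg : t⁻¹*((t⁻¹+1)*((t⁻¹)^2+1)) = ((t+1)*(t^2+1)) * ((t⁻¹)^2)^2 := by
        field_simp; ring
      rw [harg, chi_mul_sq _ (pow_ne_zero 2 (inv_ne_zero ht))]
    rw [h0, inv_reindex (fun t => χ (t*((t+1)*(t^2+1)))) (fun t => χ ((t+1)*(t^2+1))) hinv,
      erase_sum_T 0]
  have hE : ∑ t : F, χ ((t-1) * (2*t*(t^2+1))) = χ 2 * (T - 1) := by
    have hneg : ∑ t : F, χ ((t-1) * (2*t*(t^2+1)))
        = ∑ t : F, χ ((t+1) * (2*t*(t^2+1))) := by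
      refine Fintype.sum_equiv (Equiv.neg F) _ _ (fun t => ?_)
      simp only [Equiv.neg_apply]
      rw [show ((-t:F)+1) * (2*(-t)*((-t)^2+1)) = (t-1) * (2*t*(t^2+1)) by ring]
    rw [hneg]
    calc ∑ t : F, χ ((t+1) * (2*t*(t^2+1)))
        = ∑ t : F, χ 2 * χ (t*((t+1)*(t^2+1))) := by
          refine Finset.sum_congr rfl (fun t _ => ?_)
          rw [← map_mul]; congr 1; ring
      _ = χ 2 * ∑ t : F, χ (t*((t+1)*(t^2+1))) := by rw [Finset.mul_sum]
      _ = χ 2 * (T - 1) := by rw [hU]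
  have hG : ∑ t : F, χ ((2*t*(t+1)) * (2*t*(t^2+1))) = T - 1 := by
    have h0 : ∑ t : F, χ ((2*t*(t+1)) * (2*t*(t^2+1)))
        = ∑ t ∈ univ.erase (0:F), χ ((2*t*(t+1)) * (2*t*(t^2+1))) := by
      have h := Finset.sum_erase_add univ
        (fun t : F => χ ((2*t*(t+1)) * (2*t*(t^2+1)))) (mem_univ (0:F))
      have : χ ((2*(0:F)*((0:F)+1)) * (2*(0:F)*((0:F)^2+1))) = 0 := by
        norm_num
      linarith
    rw [h0]
    rw [show (∑ t ∈ univ.erase (0:F), χ ((2*t*(t+1)) * (2*t*(t^2+1))))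
        = ∑ t ∈ univ.erase (0:F), χ ((t+1)*(t^2+1)) from
      Finset.sum_congr rfl (fun t ht => ?_), erase_sum_T 0]
    have ht : t ≠ 0 := (mem_erase.mp ht).1
    rw [show (2*t*(t+1)) * (2*t*(t^2+1)) = ((t+1)*(t^2+1)) * (2*t)^2 by ring,
      chi_mul_sq _ (mul_ne_zero h2ne ht)]
  have hV : ∑ t : F, χ ((t^2-1) * (t^2+1)) = -1 := by
    have := sq_fiber hc (fun s : F => χ ((s-1)*(s+1)))
    rw [this]
    have hsplit : ∑ s : F, (χ s + 1) * χ ((s-1)*(s+1))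
        = (∑ s : F, χ (s*((s-1)*(s+1)))) + ∑ s : F, χ ((s-1)*(s+1)) := by
      rw [← Finset.sum_add_distrib]
      refine Finset.sum_congr rfl (fun s _ => ?_)
      rw [show χ (s*((s-1)*(s+1))) = χ s * χ ((s-1)*(s+1)) from map_mul _ _ _]; ring
    have hodd : ∑ s : F, χ (s*((s-1)*(s+1))) = 0 :=
      odd_sum hm1 (fun s => s*((s-1)*(s+1))) (fun s => by ring)
    have hjac : ∑ s : F, χ ((s-1)*(s+1)) = -1 := by
      have := jacobi' hc (show (-1:F) ≠ 1 from Ring.neg_one_ne_one_of_char_ne_two hc)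
      rw [← this]
      exact Finset.sum_congr rfl (fun s _ => by rw [sub_eq_add_neg])
    rw [hsplit, hodd, hjac]; ring
  have hH : ∑ t : F, χ ((t-1) * ((2*t*(t+1)) * (2*t*(t^2+1)))) = 0 := by
    have h0 : ∑ t : F, χ ((t-1) * ((2*t*(t+1)) * (2*t*(t^2+1))))
        = ∑ t ∈ univ.erase (0:F), χ ((t-1) * ((2*t*(t+1)) * (2*t*(t^2+1)))) := by
      have h := Finset.sum_erase_add univ
        (fun t : F => χ ((t-1) * ((2*t*(t+1)) * (2*t*(t^2+1))))) (mem_univ (0:F))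
      have : χ (((0:F)-1) * ((2*(0:F)*((0:F)+1)) * (2*(0:F)*((0:F)^2+1)))) = 0 := by
        norm_num
      linarith
    have h1 : ∑ t ∈ univ.erase (0:F), χ ((t-1) * ((2*t*(t+1)) * (2*t*(t^2+1))))
        = ∑ t ∈ univ.erase (0:F), χ ((t^2-1) * (t^2+1)) := by
      refine Finset.sum_congr rfl (fun t ht => ?_)
      have ht : t ≠ 0 := (mem_erase.mp ht).1
      rw [show (t-1) * ((2*t*(t+1)) * (2*t*(t^2+1))) = ((t^2-1) * (t^2+1)) * (2*t)^2 by ring,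
        chi_mul_sq _ (mul_ne_zero h2ne ht)]
    have h2 : ∑ t ∈ univ.erase (0:F), χ ((t^2-1) * (t^2+1)) = 0 := by
      have h := Finset.sum_erase_add univ (fun t : F => χ ((t^2-1) * (t^2+1))) (mem_univ (0:F))
      have hz : χ (((0:F)^2-1) * ((0:F)^2+1)) = -1 := by
        rw [show ((0:F)^2-1) * ((0:F)^2+1) = -1 by ring, hm1]
      linarith [hV]
    rw [h0, h1, h2]
  -- pointwise identity
  have key : ∀ t : F, (1 + χ (t-1)) * ((1 - χ (2*t*(t+1))) * (1 + χ (2*t*(t^2+1))))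
      = if (χ (t-1) = 1 ∧ χ (2*t*(t+1)) = -1 ∧ χ (2*t*(t^2+1)) = 1) then 8 else 0 := by
    intro t
    by_cases h : (χ (t-1) = 1 ∧ χ (2*t*(t+1)) = -1 ∧ χ (2*t*(t^2+1)) = 1)
    · rw [if_pos h, h.1, h.2.1, h.2.2]; ring
    · rw [if_neg h]
      rcases eq_or_ne t 0 with rfl | ht0
      · rw [show (0:F)-1 = -1 by ring, hm1]; ring
      rcases eq_or_ne t 1 with rfl | ht1
      · rw [show 2*(1:F)*((1:F)+1) = 2^2 by ring, quadraticChar_sq_one' h2ne]; ring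
      rcases eq_or_ne t (-1) with rfl | htm1
      · have v3 : χ ((-1:F) * 2^2) = -1 := by
          rw [map_mul, hm1, quadraticChar_sq_one' h2ne]; ring
        rw [show 2*(-1:F)*((-1:F)^2+1) = (-1:F) * 2^2 by ring, v3]; ring
      have e1 : t - 1 ≠ 0 := sub_ne_zero.mpr ht1
      have et1 : t + 1 ≠ 0 := by
        intro h'; exact htm1 (by linear_combination h')
      have e2 : 2*t*(t+1) ≠ 0 := mul_ne_zero (mul_ne_zero h2ne ht0) et1
      have e3 : 2*t*(t^2+1) ≠ 0 := mul_ne_zero (mul_ne_zero h2ne ht0) (hsq1 t)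
      rcases quadraticChar_dichotomy e1 with u1 | u1 <;>
        rcases quadraticChar_dichotomy e2 with u2 | u2 <;>
        rcases quadraticChar_dichotomy e3 with u3 | u3 <;>
        rw [u1, u2, u3] <;>
        (try (exfalso; exact h ⟨u1, u2, u3⟩)) <;> ring
  -- assemble
  have hcard : 8 * ((univ.filter (fun t : F => χ (t-1) = 1 ∧ χ (2*t*(t+1)) = -1
      ∧ χ (2*t*(t^2+1)) = 1)).card : ℤ)
      = ∑ t : F, (1 + χ (t-1)) * ((1 - χ (2*t*(t+1))) * (1 + χ (2*t*(t^2+1)))) := by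
    rw [Finset.card_filter]
    push_cast
    rw [Finset.mul_sum]
    refine Finset.sum_congr rfl (fun t _ => ?_)
    rw [key t]
    split_ifs <;> norm_num
  rw [hcard]
  have expand : ∀ t : F, (1 + χ (t-1)) * ((1 - χ (2*t*(t+1))) * (1 + χ (2*t*(t^2+1))))
      = 1 + χ (t-1) - χ (2*t*(t+1)) + χ (2*t*(t^2+1))
        - χ ((t-1) * (2*t*(t+1))) + χ ((t-1) * (2*t*(t^2+1)))
        - χ ((2*t*(t+1)) * (2*t*(t^2+1)))
        - χ ((t-1) * ((2*t*(t+1)) * (2*t*(t^2+1)))) := by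
    intro t
    simp only [map_mul]
    ring
  rw [Finset.sum_congr rfl (fun t _ => expand t)]
  simp only [Finset.sum_add_distrib, Finset.sum_sub_distrib, Finset.sum_const,
    Finset.card_univ, nsmul_eq_mul, mul_one]
  rw [hA, hB, hC, hD, hE, hG, hH]
  ring


end Aux

section Defs
variable {F : Type*} [Field F] [Fintype F] [DecidableEq F]

local notation "χ" => quadraticChar F
local notation "q" => Fintype.card F

abbrev fc (z : F) : F := if quadraticChar F z = 1 then 2*z^2 else 0

abbrev gg (a x : F) : F := fc (x+a) - fc x

abbrev dd (p : F × F) : ℕ := (univ.filter (fun x => gg p.1 x = p.2)).card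

abbrev condI (p : F × F) : Prop :=
  χ ((p.2 - 2*p.1^2)/(4*p.1)) = 1 ∧ χ ((p.2 - 2*p.1^2)/(4*p.1) + p.1) = 1

abbrev condII (p : F × F) : Prop := ∃ u, χ u = 1 ∧ p.2 = 2*u^2 ∧ ¬ χ (u - p.1) = 1

abbrev condIII (p : F × F) : Prop := ∃ v, χ v = 1 ∧ p.2 = -(2*v^2) ∧ ¬ χ (v + p.1) = 1

lemma fc_eq (z : F) : z^2*(1+((χ z : ℤ) : F)) = fc z := by
  unfold fc
  rcases eq_or_ne z 0 with rfl | hz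
  · rw [quadraticChar_zero]
    norm_num
  · rcases quadraticChar_dichotomy hz with h | h
    · rw [if_pos h, h]; push_cast; ring
    · have hne : ¬ χ z = 1 := by rw [h]; decide
      rw [if_neg hne, h]; push_cast; ring

lemma chi_zero' : (χ (0:F)) = 0 := quadraticChar_zero

lemma dd_eq (hm1 : χ (-1 : F) = -1) (hc : ringChar F ≠ 2) {a b : F} (ha : a ≠ 0) (hb : b ≠ 0) :
    dd (a, b) = (if condI (a, b) then 1 else 0) + (if condII (a, b) then 1 else 0)
      + (if condIII (a, b) then 1 else 0) := by
  have h2ne : (2:F) ≠ 0 := Ring.two_ne_zero hc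
  have h4ne : (4:F) ≠ 0 := by
    rw [show (4:F) = 2^2 by norm_num]
    exact pow_ne_zero 2 h2ne
  set x₀ := (b - 2*a^2)/(4*a) with hx₀
  set S1 := univ.filter (fun x : F => gg a x = b ∧ (χ x = 1 ∧ χ (x+a) = 1)) with hS1
  set S2 := univ.filter (fun x : F => gg a x = b ∧ (¬ χ x = 1 ∧ χ (x+a) = 1)) with hS2
  set S3 := univ.filter (fun x : F => gg a x = b ∧ (χ x = 1 ∧ ¬ χ (x+a) = 1)) with hS3
  set S4 := univ.filter (fun x : F => gg a x = b ∧ (¬ χ x = 1 ∧ ¬ χ (x+a) = 1)) with hS4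
  have hsplit : univ.filter (fun x : F => gg a x = b) = (S1 ∪ S2) ∪ (S3 ∪ S4) := by
    ext x
    simp only [hS1, hS2, hS3, hS4, mem_union, mem_filter, mem_univ, true_and]
    tauto
  have hd12 : Disjoint S1 S2 := by
    rw [Finset.disjoint_left]
    intro x h1 h2
    simp only [hS1, hS2, mem_filter] at h1 h2
    tauto
  have hd34 : Disjoint S3 S4 := by
    rw [Finset.disjoint_left]
    intro x h1 h2
    simp only [hS3, hS4, mem_filter] at h1 h2
    tauto
  have hd : Disjoint (S1 ∪ S2) (S3 ∪ S4) := by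
    rw [Finset.disjoint_left]
    intro x h1 h2
    simp only [hS1, hS2, hS3, hS4, mem_union, mem_filter] at h1 h2
    tauto
  have hcard : dd (a, b) = S1.card + S2.card + S3.card + S4.card := by
    show (univ.filter (fun x : F => gg a x = b)).card = _
    rw [hsplit, Finset.card_union_of_disjoint hd, Finset.card_union_of_disjoint hd12,
      Finset.card_union_of_disjoint hd34]
    ring
  -- S4 is empty
  have hS4e : S4 = ∅ := by
    rw [Finset.eq_empty_iff_forall_notMem]
    intro x hx
    simp only [hS4, mem_filter, mem_univ, true_and] at hx
    obtain ⟨heq, hx1, hx2⟩ := hx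
    unfold gg fc at heq
    rw [if_neg hx2, if_neg hx1, sub_zero] at heq
    exact hb heq.symm
  -- S1
  have hS1c : S1.card = if condI (a, b) then 1 else 0 := by
    by_cases h : condI (a, b)
    · rw [if_pos h]
      obtain ⟨h1, h2⟩ := h
      simp only at h1 h2
      have : S1 = {x₀} := by
        ext x
        simp only [hS1, mem_filter, mem_univ, true_and, mem_singleton]
        constructor
        · rintro ⟨heq, hx1, hx2⟩
          unfold gg fc at heq
          rw [if_pos hx2, if_pos hx1] at heq
          rw [hx₀]
          field_simp
          linear_combination heq
        · rintro rfl
          refine ⟨?_, h1, h2⟩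
          unfold gg fc
          rw [if_pos h2, if_pos h1, hx₀]
          field_simp
          ring
      rw [this, Finset.card_singleton]
    · rw [if_neg h]
      rw [Finset.card_eq_zero, Finset.eq_empty_iff_forall_notMem]
      intro x hx
      simp only [hS1, mem_filter, mem_univ, true_and] at hx
      obtain ⟨heq, hx1, hx2⟩ := hx
      unfold gg fc at heq
      rw [if_pos hx2, if_pos hx1] at heq
      have hxx : x = x₀ := by
        rw [hx₀]; field_simp; linear_combination heq
      refine h ⟨?_, ?_⟩
      · show χ x₀ = 1
        rw [← hxx]; exact hx1
      · show χ (x₀ + a) = 1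
        rw [← hxx]; exact hx2
  -- S2
  have hS2c : S2.card = if condII (a, b) then 1 else 0 := by
    by_cases h : condII (a, b)
    · rw [if_pos h]
      obtain ⟨u, hu1, hub, hu2⟩ := h
      simp only at hu1 hub hu2
      have hune : u ≠ 0 := by
        intro h'; rw [h'] at hu1; rw [chi_zero'] at hu1; omega
      have : S2 = {u - a} := by
        ext x
        simp only [hS2, mem_filter, mem_univ, true_and, mem_singleton]
        constructor
        · rintro ⟨heq, hx1, hx2⟩
          unfold gg fc at heq
          rw [if_pos hx2, if_neg hx1, sub_zero] at heq
          rw [hub] at heq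
          have h2z : 2 * ((x + a - u) * (x + a + u)) = 0 := by linear_combination heq
          rcases mul_eq_zero.mp ((mul_eq_zero.mp h2z).resolve_left h2ne) with h' | h'
          · linear_combination h'
          · exfalso
            have : x + a = -u := by linear_combination h'
            rw [this, chi_neg hm1, hu1] at hx2
            omega
        · rintro rfl
          have hxa : u - a + a = u := by ring
          refine ⟨?_, hu2, by rw [hxa]; exact hu1⟩
          unfold gg fc
          rw [hxa, if_pos hu1, if_neg hu2, sub_zero, hub]
      rw [this, Finset.card_singleton]
    · rw [if_neg h]
      rw [Finset.card_eq_zero, Finset.eq_empty_iff_forall_notMem]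
      intro x hx
      simp only [hS2, mem_filter, mem_univ, true_and] at hx
      obtain ⟨heq, hx1, hx2⟩ := hx
      unfold gg fc at heq
      rw [if_pos hx2, if_neg hx1, sub_zero] at heq
      exact h ⟨x + a, hx2, heq.symm, by rw [show x + a - a = x by ring]; exact hx1⟩
  -- S3
  have hS3c : S3.card = if condIII (a, b) then 1 else 0 := by
    by_cases h : condIII (a, b)
    · rw [if_pos h]
      obtain ⟨v, hv1, hvb, hv2⟩ := h
      simp only at hv1 hvb hv2
      have : S3 = {v} := by
        ext x
        simp only [hS3, mem_filter, mem_univ, true_and, mem_singleton]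
        constructor
        · rintro ⟨heq, hx1, hx2⟩
          unfold gg fc at heq
          rw [if_neg hx2, if_pos hx1, zero_sub] at heq
          rw [hvb] at heq
          have h2z : 2 * ((x - v) * (x + v)) = 0 := by linear_combination -heq
          rcases mul_eq_zero.mp ((mul_eq_zero.mp h2z).resolve_left h2ne) with h' | h'
          · linear_combination h'
          · exfalso
            have : x = -v := by linear_combination h'
            rw [this, chi_neg hm1, hv1] at hx1
            omega
        · rintro rfl
          refine ⟨?_, hv1, hv2⟩
          unfold gg fc
          rw [if_neg hv2, if_pos hv1, zero_sub, hvb]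
      rw [this, Finset.card_singleton]
    · rw [if_neg h]
      rw [Finset.card_eq_zero, Finset.eq_empty_iff_forall_notMem]
      intro x hx
      simp only [hS3, mem_filter, mem_univ, true_and] at hx
      obtain ⟨heq, hx1, hx2⟩ := hx
      unfold gg fc at heq
      rw [if_neg hx2, if_pos hx1, zero_sub] at heq
      exact h ⟨x, hx1, by linear_combination -heq, hx2⟩
  rw [hcard, hS1c, hS2c, hS3c, hS4e]
  simp


lemma dd_zero (hm1 : χ (-1 : F) = -1) (hc : ringChar F ≠ 2) {a : F} (ha : a ≠ 0) :
    4 * (dd (a, (0:F)) : ℤ) = q + 1 := by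
  have h2ne : (2:F) ≠ 0 := Ring.two_ne_zero hc
  set S := univ.filter (fun x : F => gg a x = 0) with hS
  have hSeq : S = univ.filter (fun x : F => ¬ χ x = 1 ∧ ¬ χ (x+a) = 1) := by
    ext x
    simp only [hS, mem_filter, mem_univ, true_and]
    constructor
    · intro heq
      by_cases hx1 : χ x = 1 <;> by_cases hx2 : χ (x+a) = 1
      · exfalso
        unfold gg fc at heq
        rw [if_pos hx2, if_pos hx1] at heq
        have h1 : 2 * (a * (2*x+a)) = 0 := by linear_combination heq
        have h2 : 2*x + a = 0 :=
          (mul_eq_zero.mp ((mul_eq_zero.mp h1).resolve_left h2ne)).resolve_left ha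
        have h3 : x + a = -x := by linear_combination h2
        rw [h3, chi_neg hm1, hx1] at hx2
        omega
      · exfalso
        unfold gg fc at heq
        rw [if_neg hx2, if_pos hx1, zero_sub, neg_eq_zero] at heq
        have : x = 0 := by
          have := (mul_eq_zero.mp heq).resolve_left h2ne
          exact pow_eq_zero_iff (n := 2) (by norm_num) |>.mp this
        rw [this, chi_zero'] at hx1
        omega
      · exfalso
        unfold gg fc at heq
        rw [if_pos hx2, if_neg hx1, sub_zero] at heq
        have : x + a = 0 := by
          have := (mul_eq_zero.mp heq).resolve_left h2ne
          exact pow_eq_zero_iff (n := 2) (by norm_num) |>.mp this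
        rw [this, chi_zero'] at hx2
        omega
      · exact ⟨hx1, hx2⟩
    · intro ⟨hx1, hx2⟩
      unfold gg fc
      rw [if_neg hx2, if_neg hx1, sub_zero]
  -- the weighted sum
  have hsum : ∑ x : F, (1 - χ x) * (1 - χ (x+a)) = q - 1 := by
    have hexp : ∀ x : F, (1 - χ x) * (1 - χ (x+a)) = 1 - χ x - χ (x+a) + χ (x*(x+a)) := by
      intro x
      rw [show χ (x*(x+a)) = χ x * χ (x+a) from map_mul _ _ _]
      ring
    rw [Finset.sum_congr rfl (fun x _ => hexp x)]
    simp only [Finset.sum_add_distrib, Finset.sum_sub_distrib, Finset.sum_const,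
      Finset.card_univ, nsmul_eq_mul, mul_one]
    rw [quadraticChar_sum_zero hc, sum_shift_zero hc a, jacobi hc ha]
    ring
  have hres : ∑ x : F, (1 - χ x) * (1 - χ (x+a)) = ∑ x ∈ S, (1 - χ x) * (1 - χ (x+a)) := by
    rw [hSeq]
    refine (Finset.sum_filter_of_ne ?_).symm
    intro x _ hne
    constructor
    · intro h1; rw [h1] at hne; norm_num at hne
    · intro h2; rw [h2] at hne; norm_num at hne
  set s₀ : F := if χ a = 1 then -a else 0 with hs₀
  have hadi : χ a = 1 ∨ χ a = -1 := quadraticChar_dichotomy ha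
  have hs₀S : s₀ ∈ S := by
    rw [hSeq, mem_filter]
    refine ⟨mem_univ _, ?_⟩
    rw [hs₀]
    split_ifs with h
    · constructor
      · rw [chi_neg hm1, h]; decide
      · rw [show -a + a = 0 by ring, chi_zero']; decide
    · constructor
      · rw [chi_zero']; decide
      · rw [zero_add]; exact h
  have hterm0 : (1 - χ s₀) * (1 - χ (s₀+a)) = 2 := by
    rw [hs₀]
    split_ifs with h
    · rw [chi_neg hm1, h, show -a + a = 0 by ring, chi_zero']; ring
    · rw [chi_zero', zero_add, (quadraticChar_eq_neg_one_iff_not_one ha).mpr h]; ring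
  have hterm : ∀ x ∈ S.erase s₀, (1 - χ x) * (1 - χ (x+a)) = 4 := by
    intro x hx
    obtain ⟨hxs, hxS⟩ := mem_erase.mp hx
    rw [hSeq, mem_filter] at hxS
    obtain ⟨-, hx1, hx2⟩ := hxS
    have hxne : x ≠ 0 := by
      rintro rfl
      rw [zero_add] at hx2
      have : χ a = -1 := (quadraticChar_eq_neg_one_iff_not_one ha).mpr hx2
      apply hxs
      rw [hs₀, if_neg hx2]
    have hxane : x + a ≠ 0 := by
      intro h
      have hxa : x = -a := by linear_combination h
      have : χ a = 1 := by
        rcases hadi with h' | h'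
        · exact h'
        · exfalso
          rw [hxa, chi_neg hm1, h'] at hx1
          norm_num at hx1
      apply hxs
      rw [hs₀, if_pos this, ← hxa]
    rw [(quadraticChar_eq_neg_one_iff_not_one hxne).mpr hx1,
      (quadraticChar_eq_neg_one_iff_not_one hxane).mpr hx2]
    ring
  have hScard : (S.card : ℤ) = (S.erase s₀).card + 1 := by
    rw [Finset.card_erase_of_mem hs₀S]
    have h1 : 1 ≤ S.card := Finset.card_pos.mpr ⟨s₀, hs₀S⟩
    omega
  have hfinal : ∑ x ∈ S, (1 - χ x) * (1 - χ (x+a)) = 4 * ((S.erase s₀).card : ℤ) + 2 := by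
    rw [← Finset.sum_erase_add _ _ hs₀S, hterm0, Finset.sum_congr rfl hterm,
      Finset.sum_const, nsmul_eq_mul]
    ring
  have : dd (a, (0:F)) = S.card := rfl
  rw [this]
  rw [hres, hfinal] at hsum
  omega


lemma chi_two_sq (u : F) (hu : u ≠ 0) : χ (2*u^2) = χ 2 := by
  rw [map_mul, quadraticChar_sq_one' hu, mul_one]

lemma condII_III_false (hm1 : χ (-1 : F) = -1) (hc : ringChar F ≠ 2) (p : F × F)
    (h2 : condII p) (h3 : condIII p) : False := by
  have h2ne : (2:F) ≠ 0 := Ring.two_ne_zero hc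
  obtain ⟨u, hu1, hub, -⟩ := h2
  obtain ⟨v, hv1, hvb, -⟩ := h3
  have hu0 : u ≠ 0 := fun h => by rw [h, chi_zero'] at hu1; omega
  have hv0 : v ≠ 0 := fun h => by rw [h, chi_zero'] at hv1; omega
  have e1 : χ p.2 = χ 2 := by rw [hub, chi_two_sq u hu0]
  have e2 : χ p.2 = - χ 2 := by
    rw [hvb, show -(2*v^2) = -1 * (2*v^2) by ring, map_mul, hm1, chi_two_sq v hv0]
    ring
  have := quadraticChar_dichotomy h2ne
  omega

lemma x0_key (hc : ringChar F ≠ 2) {u t : F} (hu : u ≠ 0) (ht : t ≠ 0) :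
    χ ((2*u^2 - 2*(u*t)^2)/(4*(u*t))) = χ (-1) * (χ u * (χ (t-1) * χ (2*t*(t+1)))) ∧
    χ ((2*u^2 - 2*(u*t)^2)/(4*(u*t)) + u*t) = χ u * χ (2*t*(t^2+1)) := by
  have h2ne : (2:F) ≠ 0 := Ring.two_ne_zero hc
  have h2t : 2*t ≠ 0 := mul_ne_zero h2ne ht
  have h4ne : (4:F) ≠ 0 := by
    rw [show (4:F) = 2^2 by norm_num]; exact pow_ne_zero 2 h2ne
  constructor
  · have hx : (2*u^2 - 2*(u*t)^2)/(4*(u*t)) * (2*t)^2 = -1 * (u * ((t-1) * (2*t*(t+1)))) := by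
      field_simp
      ring
    rw [← chi_mul_sq ((2*u^2 - 2*(u*t)^2)/(4*(u*t))) h2t, hx, map_mul, map_mul, map_mul]
  · have hx : ((2*u^2 - 2*(u*t)^2)/(4*(u*t)) + u*t) * (2*t)^2 = u * (2*t*(t^2+1)) := by
      field_simp
      ring
    rw [← chi_mul_sq ((2*u^2 - 2*(u*t)^2)/(4*(u*t)) + u*t) h2t, hx, map_mul]

lemma x0_key' (hc : ringChar F ≠ 2) {v t : F} (hv : v ≠ 0) (ht : t ≠ 0) :
    χ ((-(2*v^2) - 2*(-(v*t))^2)/(4*(-(v*t)))) = χ v * χ (2*t*(t^2+1)) ∧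
    χ ((-(2*v^2) - 2*(-(v*t))^2)/(4*(-(v*t))) + -(v*t))
      = χ (-1) * (χ v * (χ (t-1) * χ (2*t*(t+1)))) := by
  have h2ne : (2:F) ≠ 0 := Ring.two_ne_zero hc
  have h2t : 2*t ≠ 0 := mul_ne_zero h2ne ht
  have h4ne : (4:F) ≠ 0 := by
    rw [show (4:F) = 2^2 by norm_num]; exact pow_ne_zero 2 h2ne
  constructor
  · have hx : (-(2*v^2) - 2*(-(v*t))^2)/(4*(-(v*t))) * (2*t)^2 = v * (2*t*(t^2+1)) := by
      field_simp
      ring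
    rw [← chi_mul_sq ((-(2*v^2) - 2*(-(v*t))^2)/(4*(-(v*t)))) h2t, hx, map_mul]
  · have hx : ((-(2*v^2) - 2*(-(v*t))^2)/(4*(-(v*t))) + -(v*t)) * (2*t)^2
        = -1 * (v * ((t-1) * (2*t*(t+1)))) := by
      field_simp
      ring
    rw [← chi_mul_sq ((-(2*v^2) - 2*(-(v*t))^2)/(4*(-(v*t))) + -(v*t)) h2t, hx,
      map_mul, map_mul, map_mul]

lemma tset_mem_ne (hm1 : χ (-1 : F) = -1) {t : F}
    (h : χ (t-1) = 1 ∧ χ (2*t*(t+1)) = -1 ∧ χ (2*t*(t^2+1)) = 1) : t ≠ 0 := by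
  rintro rfl
  rw [show 2*(0:F)*((0:F)+1) = 0 by ring, chi_zero'] at h
  omega

lemma p2_card (hm1 : χ (-1 : F) = -1) (hc : ringChar F ≠ 2) :
    ((univ.filter (fun u : F => χ u = 1)) ×ˢ (univ.filter
        (fun t : F => χ (t-1) = 1 ∧ χ (2*t*(t+1)) = -1 ∧ χ (2*t*(t^2+1)) = 1))).card
      = (univ.filter (fun p : F × F => p.1 ≠ 0 ∧ condI p ∧ condII p)).card := by
  refine Finset.card_bij (fun p _ => (p.1 * p.2, 2 * p.1^2)) ?_ ?_ ?_
  · rintro ⟨u, t⟩ hp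
    rw [Finset.mem_product, mem_filter, mem_filter] at hp
    obtain ⟨⟨-, hu1⟩, -, ht1, ht2, ht3⟩ := hp
    have hu0 : u ≠ 0 := fun h => by rw [h, chi_zero'] at hu1; omega
    have ht0 : t ≠ 0 := tset_mem_ne hm1 ⟨ht1, ht2, ht3⟩
    obtain ⟨k1, k2⟩ := x0_key hc hu0 ht0
    rw [mem_filter]
    refine ⟨mem_univ _, mul_ne_zero hu0 ht0, ⟨?_, ?_⟩, u, hu1, rfl, ?_⟩
    · show χ ((2*u^2 - 2*(u*t)^2)/(4*(u*t))) = 1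
      rw [k1, hm1, hu1, ht1, ht2]; ring
    · show χ ((2*u^2 - 2*(u*t)^2)/(4*(u*t)) + u*t) = 1
      rw [k2, hu1, ht3]; ring
    · show ¬ χ (u - u*t) = 1
      rw [show u - u*t = -1 * (u * (t-1)) by ring, map_mul, map_mul, hm1, hu1, ht1]
      decide
  · rintro ⟨u, t⟩ hp ⟨u', t'⟩ hp' heq
    rw [Finset.mem_product, mem_filter, mem_filter] at hp hp'
    obtain ⟨⟨-, hu1⟩, -, ht⟩ := hp
    obtain ⟨⟨-, hu1'⟩, -, ht'⟩ := hp'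
    have hu0 : u ≠ 0 := fun h => by rw [h, chi_zero'] at hu1; omega
    have ht0 : t ≠ 0 := tset_mem_ne hm1 ht
    rw [Prod.mk.injEq] at heq
    obtain ⟨e1, e2⟩ := heq
    have h2ne : (2:F) ≠ 0 := Ring.two_ne_zero hc
    have huu : u = u' := by
      have h0 : 2 * ((u - u') * (u + u')) = 0 := by linear_combination e2
      rcases mul_eq_zero.mp ((mul_eq_zero.mp h0).resolve_left h2ne) with h | h
      · linear_combination h
      · exfalso
        have hh : u = -u' := by linear_combination h
        rw [hh, chi_neg hm1] at hu1
        simp only at hu1 hu1'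
        omega
    subst huu
    have : t = t' := by
      have := mul_left_cancel₀ hu0 e1
      exact this
    rw [this]
  · rintro ⟨a, b⟩ hp
    rw [mem_filter] at hp
    obtain ⟨-, ha0, hI, u, hu1, hub0, hu20⟩ := hp
    have ha : a ≠ 0 := ha0
    have hub : b = 2*u^2 := hub0
    have hu2 : ¬ χ (u - a) = 1 := hu20
    have hu0 : u ≠ 0 := fun h => by rw [h, chi_zero'] at hu1; omega
    set t := a / u with htdef
    have hat : a = u * t := by rw [htdef]; field_simp
    have ht0 : t ≠ 0 := by
      intro h
      rw [h, mul_zero] at hat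
      exact ha hat
    obtain ⟨hI1, hI2⟩ := hI
    simp only at hI1 hI2
    rw [hub, hat] at hI1 hI2
    obtain ⟨k1, k2⟩ := x0_key hc hu0 ht0
    have ht1 : χ (t - 1) = 1 := by
      have hne : ¬ χ (u - u*t) = 1 := by rw [← hat]; exact hu2
      rw [show u - u*t = -1 * (u * (t-1)) by ring, map_mul, map_mul, hm1, hu1] at hne
      have htne1 : t ≠ 1 := by
        intro h1
        rw [h1, show (2*u^2 - 2*(u*1)^2)/(4*(u*1)) = (0:F) by rw [mul_one]; simp] at hI1
        rw [chi_zero'] at hI1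
        omega
      rcases quadraticChar_dichotomy (sub_ne_zero.mpr htne1) with h | h
      · exact h
      · rw [h] at hne; omega
    have ht2 : χ (2*t*(t+1)) = -1 := by
      rw [k1, hm1, hu1, ht1] at hI1
      linarith
    have ht3 : χ (2*t*(t^2+1)) = 1 := by
      rw [k2, hu1] at hI2
      linarith
    refine ⟨(u, t), ?_, ?_⟩
    · rw [Finset.mem_product, mem_filter, mem_filter]
      exact ⟨⟨mem_univ _, hu1⟩, mem_univ _, ht1, ht2, ht3⟩
    · rw [Prod.mk.injEq]
      exact ⟨hat.symm, hub.symm⟩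

lemma p3_card (hm1 : χ (-1 : F) = -1) (hc : ringChar F ≠ 2) :
    ((univ.filter (fun v : F => χ v = 1)) ×ˢ (univ.filter
        (fun t : F => χ (t-1) = 1 ∧ χ (2*t*(t+1)) = -1 ∧ χ (2*t*(t^2+1)) = 1))).card
      = (univ.filter (fun p : F × F => p.1 ≠ 0 ∧ condI p ∧ condIII p)).card := by
  refine Finset.card_bij (fun p _ => (-(p.1 * p.2), -(2 * p.1^2))) ?_ ?_ ?_
  · rintro ⟨v, t⟩ hp
    rw [Finset.mem_product, mem_filter, mem_filter] at hp
    obtain ⟨⟨-, hv1⟩, -, ht1, ht2, ht3⟩ := hp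
    have hv0 : v ≠ 0 := fun h => by rw [h, chi_zero'] at hv1; omega
    have ht0 : t ≠ 0 := tset_mem_ne hm1 ⟨ht1, ht2, ht3⟩
    obtain ⟨k1, k2⟩ := x0_key' hc hv0 ht0
    rw [mem_filter]
    refine ⟨mem_univ _, neg_ne_zero.mpr (mul_ne_zero hv0 ht0), ⟨?_, ?_⟩, v, hv1, rfl, ?_⟩
    · show χ ((-(2*v^2) - 2*(-(v*t))^2)/(4*(-(v*t)))) = 1
      rw [k1, hv1, ht3]; ring
    · show χ ((-(2*v^2) - 2*(-(v*t))^2)/(4*(-(v*t))) + -(v*t)) = 1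
      rw [k2, hm1, hv1, ht1, ht2]; ring
    · show ¬ χ (v + -(v*t)) = 1
      rw [show v + -(v*t) = -1 * (v * (t-1)) by ring, map_mul, map_mul, hm1, hv1, ht1]
      decide
  · rintro ⟨v, t⟩ hp ⟨v', t'⟩ hp' heq
    rw [Finset.mem_product, mem_filter, mem_filter] at hp hp'
    obtain ⟨⟨-, hv1⟩, -, ht⟩ := hp
    obtain ⟨⟨-, hv1'⟩, -, ht'⟩ := hp'
    have hv0 : v ≠ 0 := fun h => by rw [h, chi_zero'] at hv1; omega
    rw [Prod.mk.injEq] at heq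
    obtain ⟨e1, e2⟩ := heq
    have hvv : v = v' := by
      have h2ne : (2:F) ≠ 0 := Ring.two_ne_zero hc
      have h0 : 2 * ((v - v') * (v + v')) = 0 := by linear_combination -e2
      rcases mul_eq_zero.mp ((mul_eq_zero.mp h0).resolve_left h2ne) with h | h
      · linear_combination h
      · exfalso
        have hh : v = -v' := by linear_combination h
        rw [hh, chi_neg hm1] at hv1
        simp only at hv1 hv1'
        omega
    subst hvv
    have e1' : v * t = v * t' := by linear_combination -e1
    rw [mul_left_cancel₀ hv0 e1']
  · rintro ⟨a, b⟩ hp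
    rw [mem_filter] at hp
    obtain ⟨-, ha0, hI, v, hv1, hvb0, hv20⟩ := hp
    have ha : a ≠ 0 := ha0
    have hvb : b = -(2*v^2) := hvb0
    have hv2 : ¬ χ (v + a) = 1 := hv20
    have hv0 : v ≠ 0 := fun h => by rw [h, chi_zero'] at hv1; omega
    set t := -(a / v) with htdef
    have hat : a = -(v * t) := by rw [htdef]; field_simp
    have ht0 : t ≠ 0 := by
      intro h
      rw [h, mul_zero, neg_zero] at hat
      exact ha hat
    obtain ⟨hI1, hI2⟩ := hI
    simp only at hI1 hI2
    rw [hvb, hat] at hI1 hI2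
    obtain ⟨k1, k2⟩ := x0_key' hc hv0 ht0
    have ht1 : χ (t - 1) = 1 := by
      have hne : ¬ χ (v + -(v*t)) = 1 := by rw [← hat]; exact hv2
      rw [show v + -(v*t) = -1 * (v * (t-1)) by ring, map_mul, map_mul, hm1, hv1] at hne
      have htne1 : t ≠ 1 := by
        intro h1
        have h4v : (4:F) * v ≠ 0 := by
          have h2ne : (2:F) ≠ 0 := Ring.two_ne_zero hc
          exact mul_ne_zero (by rw [show (4:F) = 2^2 by norm_num]; exact pow_ne_zero 2 h2ne) hv0
        rw [h1, show (-(2*v^2) - 2*(-(v*1))^2)/(4*(-(v*1))) + -(v*1) = (0:F) by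
          rw [mul_one, show (4:F) * -v = -(4*v) by ring,
            show (-(2*v^2) - 2*(-v)^2) / -(4*v) = v from by rw [div_eq_iff (neg_ne_zero.mpr h4v)]; ring]
          ring] at hI2
        rw [chi_zero'] at hI2
        omega
      rcases quadraticChar_dichotomy (sub_ne_zero.mpr htne1) with h | h
      · exact h
      · rw [h] at hne; omega
    have ht2 : χ (2*t*(t+1)) = -1 := by
      rw [k2, hm1, hv1, ht1] at hI2
      linarith
    have ht3 : χ (2*t*(t^2+1)) = 1 := by
      rw [k1, hv1] at hI1
      linarith
    refine ⟨(v, t), ?_, ?_⟩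
    · rw [Finset.mem_product, mem_filter, mem_filter]
      exact ⟨⟨mem_univ _, hv1⟩, mem_univ _, ht1, ht2, ht3⟩
    · rw [Prod.mk.injEq]
      exact ⟨hat.symm, hvb.symm⟩


lemma dd_sum_iff (hm1 : χ (-1 : F) = -1) (hc : ringChar F ≠ 2) {a b : F}
    (ha : a ≠ 0) (hb : b ≠ 0) :
    dd (a, b) ≤ 2 ∧ (dd (a, b) = 2 ↔ ((condI (a,b) ∧ condII (a,b)) ∨ (condI (a,b) ∧ condIII (a,b)))) := by
  have hex : ¬ (condII (a,b) ∧ condIII (a,b)) :=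
    fun ⟨h2, h3⟩ => condII_III_false hm1 hc _ h2 h3
  rw [dd_eq hm1 hc ha hb]
  by_cases c2 : condII (a,b)
  · by_cases c3 : condIII (a,b)
    · exact absurd ⟨c2, c3⟩ hex
    · rw [if_pos c2, if_neg c3]
      by_cases c1 : condI (a,b)
      · rw [if_pos c1]
        exact ⟨by omega, ⟨fun _ => Or.inl ⟨c1, c2⟩, fun _ => by omega⟩⟩
      · rw [if_neg c1]
        refine ⟨by omega, ⟨fun h => by omega, fun h => ?_⟩⟩
        rcases h with ⟨h1, -⟩ | ⟨h1, -⟩ <;> exact absurd h1 c1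
  · by_cases c3 : condIII (a,b)
    · rw [if_neg c2, if_pos c3]
      by_cases c1 : condI (a,b)
      · rw [if_pos c1]
        exact ⟨by omega, ⟨fun _ => Or.inr ⟨c1, c3⟩, fun _ => by omega⟩⟩
      · rw [if_neg c1]
        refine ⟨by omega, ⟨fun h => by omega, fun h => ?_⟩⟩
        rcases h with ⟨h1, -⟩ | ⟨h1, -⟩ <;> exact absurd h1 c1
    · rw [if_neg c2, if_neg c3]
      refine ⟨?_, ⟨fun h => ?_, fun h => ?_⟩⟩
      · split_ifs <;> omega
      · split_ifs at h <;> omega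
      · rcases h with ⟨-, h2⟩ | ⟨-, h2⟩
        · exact absurd h2 c2
        · exact absurd h2 c3

lemma dd_row (a : F) : ∑ b : F, dd (a, b) = q := by
  have h := Finset.card_eq_sum_card_fiberwise
    (s := (univ : Finset F)) (t := (univ : Finset F)) (f := gg a)
    (fun x _ => mem_univ (gg a x))
  rw [Finset.card_univ] at h
  exact h.symm

lemma card_filter_pairs (P : F × F → Prop) [DecidablePred P] :
    (univ.filter P).card = ∑ a : F, (univ.filter (fun b => P (a, b))).card := by
  rw [Finset.card_filter, ← Finset.univ_product_univ, Finset.sum_product]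
  refine Finset.sum_congr rfl (fun a _ => ?_)
  rw [Finset.card_filter]

end Defs

/-- the differential spectrum of `F(x) = x^2 (1 + η(x))` for
`q ≡ 3 (mod 4)`, `q > 7`, in terms of `T = ∑ y, η((y+1)(y^2+1))`. The
equalities for `ω₂, ω₁, ω₀` are stated multiplied through by the (exact)
denominators `8, 4, 8`. -/
theorem stmt_19 {F : Type*} [Field F] [Fintype F] [DecidableEq F]
    (hodd : Odd (Fintype.card F)) (h4 : Fintype.card F % 4 = 3)
    (hq : 7 < Fintype.card F)
    (T : ℤ) (hT : T = ∑ y : F, quadraticChar F ((y + 1) * (y ^ 2 + 1)))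
    (ω : ℕ → ℕ)
    (hω : ∀ i : ℕ, ω i = {p : F × F | p.1 ≠ 0 ∧
      {x : F | (x + p.1) ^ 2 * (1 + ((quadraticChar F (x + p.1) : ℤ) : F))
          - x ^ 2 * (1 + ((quadraticChar F x : ℤ) : F)) = p.2}.ncard = i}.ncard) :
    ω ((Fintype.card F + 1) / 4) = Fintype.card F - 1 ∧
    (8 : ℤ) * ω 2 = ((Fintype.card F : ℤ) - 1) *
      ((Fintype.card F : ℤ) + 1 + (quadraticChar F 2 - 1) * T) ∧
    (4 : ℤ) * ω 1 = ((Fintype.card F : ℤ) - 1) *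
      (2 * (Fintype.card F : ℤ) - 2 + (1 - quadraticChar F 2) * T) ∧
    (8 : ℤ) * ω 0 = ((Fintype.card F : ℤ) - 1) *
      (3 * (Fintype.card F : ℤ) - 5 + (quadraticChar F 2 - 1) * T) := by
  set q := Fintype.card F with hqdef
  have hc : ringChar F ≠ 2 := by
    intro h
    rw [FiniteField.even_card_iff_char_two] at h
    omega
  have hm1 : quadraticChar F (-1) = -1 := by
    rw [quadraticChar_neg_one hc, ← hqdef, ZMod.χ₄_nat_three_mod_four h4]
  set k := (q + 1) / 4 with hkdef
  have hk : 4 * k = q + 1 := by omega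
  have hk3 : 3 ≤ k := by omega
  -- ω in terms of dd
  have hωcard : ∀ i : ℕ, ω i
      = (univ.filter (fun p : F × F => p.1 ≠ 0 ∧ dd p = i)).card := by
    intro i
    rw [hω i]
    have hinner : ∀ p : F × F, {x : F | (x + p.1) ^ 2 * (1 + ((quadraticChar F (x + p.1) : ℤ) : F))
        - x ^ 2 * (1 + ((quadraticChar F x : ℤ) : F)) = p.2}.ncard = dd p := by
      intro p
      have hset : {x : F | (x + p.1) ^ 2 * (1 + ((quadraticChar F (x + p.1) : ℤ) : F))
          - x ^ 2 * (1 + ((quadraticChar F x : ℤ) : F)) = p.2}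
          = {x : F | gg p.1 x = p.2} := by
        ext x
        simp only [Set.mem_setOf_eq, fc_eq]
        try rfl
      rw [hset, Set.ncard_eq_toFinset_card', Set.toFinset_setOf]
    simp only [hinner]
    rw [Set.ncard_eq_toFinset_card', Set.toFinset_setOf]
  have hddk : ∀ a : F, a ≠ 0 → dd (a, (0:F)) = k := by
    intro a ha
    have h := dd_zero hm1 hc ha
    rw [← hqdef] at h
    omega
  set E := univ.erase (0:F) with hEdef
  have hE : E.card + 1 = q := by
    rw [hEdef, Finset.card_erase_add_one (mem_univ (0:F)), Finset.card_univ]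
  set W0 := univ.filter (fun p : F × F => p.1 ≠ 0 ∧ dd p = 0) with hW0
  set W1 := univ.filter (fun p : F × F => p.1 ≠ 0 ∧ dd p = 1) with hW1
  set W2 := univ.filter (fun p : F × F => p.1 ≠ 0 ∧ dd p = 2) with hW2
  -- the ω_k count
  have hWkcard : (univ.filter (fun p : F × F => p.1 ≠ 0 ∧ dd p = k)).card = E.card := by
    refine (Finset.card_bij (fun (a : F) (_ : a ∈ E) => ((a, (0:F)) : F × F)) ?_ ?_ ?_).symm
    · intro a haE
      have ha : a ≠ 0 := (mem_erase.mp haE).1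
      rw [mem_filter]
      exact ⟨mem_univ _, ha, hddk a ha⟩
    · intro a _ a' _ h
      exact (Prod.mk.injEq _ _ _ _).mp h |>.1
    · rintro ⟨a, b⟩ hp
      rw [mem_filter] at hp
      obtain ⟨-, ha, hd⟩ := hp
      have ha' : a ≠ 0 := ha
      have hb : b = 0 := by
        by_contra hb
        have := (dd_sum_iff hm1 hc ha' hb).1
        omega
      subst hb
      exact ⟨a, mem_erase.mpr ⟨ha', mem_univ _⟩, rfl⟩
  -- partition of nonzero pairs
  have hVsplit : E ×ˢ E = (W0 ∪ W1) ∪ W2 := by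
    ext ⟨a, b⟩
    rw [Finset.mem_product, mem_erase, mem_erase]
    simp only [hW0, hW1, hW2, mem_union, mem_filter, mem_univ, true_and, and_true]
    constructor
    · rintro ⟨ha, hb⟩
      have hle := (dd_sum_iff hm1 hc ha hb).1
      rcases Nat.lt_or_ge (dd (a, b)) 1 with h | h
      · exact Or.inl (Or.inl ⟨ha, by omega⟩)
      rcases Nat.lt_or_ge (dd (a, b)) 2 with h' | h'
      · exact Or.inl (Or.inr ⟨ha, by omega⟩)
      · exact Or.inr ⟨ha, by omega⟩
    · intro h
      have hab : a ≠ 0 ∧ dd (a, b) ≤ 2 := by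
        rcases h with (⟨ha, hd⟩ | ⟨ha, hd⟩) | ⟨ha, hd⟩ <;> exact ⟨ha, by omega⟩
      obtain ⟨ha, hd⟩ := hab
      refine ⟨ha, ?_⟩
      intro hb
      subst hb
      rw [hddk a ha] at hd
      omega
  have hd01 : Disjoint W0 W1 := by
    rw [Finset.disjoint_left]
    intro p h1 h2
    rw [hW0, mem_filter] at h1
    rw [hW1, mem_filter] at h2
    omega
  have hd012 : Disjoint (W0 ∪ W1) W2 := by
    rw [Finset.disjoint_left]
    intro p h1 h2
    rw [Finset.mem_union, hW0, mem_filter, hW1, mem_filter] at h1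
    rw [hW2, mem_filter] at h2
    rcases h1 with h1 | h1 <;> omega
  -- f3
  have f3 : W0.card + W1.card + W2.card = E.card * E.card := by
    rw [← Finset.card_product, hVsplit, Finset.card_union_of_disjoint hd012,
      Finset.card_union_of_disjoint hd01]
  -- f1
  have row : ∀ a ∈ E, k + ∑ b ∈ E, dd (a, b) = q := by
    intro a haE
    have ha : a ≠ 0 := (mem_erase.mp haE).1
    have h1 : ∑ b : F, dd (a, b) = q := by rw [dd_row a, hqdef]
    have h2 := Finset.sum_erase_add univ (fun b => dd (a, b)) (mem_univ (0:F))
    rw [h1, hddk a ha] at h2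
    rw [← hEdef] at h2
    omega
  have f1 : E.card * k + (∑ p ∈ E ×ˢ E, dd p) = E.card * q := by
    rw [Finset.sum_product]
    calc E.card * k + ∑ a ∈ E, ∑ b ∈ E, dd (a, b)
        = ∑ a ∈ E, (k + ∑ b ∈ E, dd (a, b)) := by
          rw [Finset.sum_add_distrib, Finset.sum_const, smul_eq_mul]
      _ = ∑ a ∈ E, q := Finset.sum_congr rfl row
      _ = E.card * q := by rw [Finset.sum_const, smul_eq_mul]
  -- f2
  have f2 : (∑ p ∈ E ×ˢ E, dd p) = W1.card + 2 * W2.card := by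
    rw [hVsplit, Finset.sum_union hd012, Finset.sum_union hd01]
    have s0 : ∑ p ∈ W0, dd p = 0 := by
      refine Finset.sum_eq_zero (fun p hp => ?_)
      rw [hW0, mem_filter] at hp
      exact hp.2.2
    have s1 : ∑ p ∈ W1, dd p = W1.card := by
      rw [Finset.card_eq_sum_ones]
      refine Finset.sum_congr rfl (fun p hp => ?_)
      rw [hW1, mem_filter] at hp
      exact hp.2.2
    have s2 : ∑ p ∈ W2, dd p = 2 * W2.card := by
      have : ∑ p ∈ W2, dd p = ∑ p ∈ W2, 2 := by
        refine Finset.sum_congr rfl (fun p hp => ?_)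
        rw [hW2, mem_filter] at hp
        exact hp.2.2
      rw [this, Finset.sum_const, smul_eq_mul, Nat.mul_comm]
    rw [s0, s1, s2]
    omega
  -- f4
  set Qc := (univ.filter (fun u : F => quadraticChar F u = 1)).card with hQc
  set Tc := (univ.filter (fun t : F => quadraticChar F (t-1) = 1
      ∧ quadraticChar F (2*t*(t+1)) = -1 ∧ quadraticChar F (2*t*(t^2+1)) = 1)).card with hTc
  have f4 : W2.card = Qc * Tc + Qc * Tc := by
    have hsplit2 : W2 = (univ.filter (fun p : F × F => p.1 ≠ 0 ∧ condI p ∧ condII p))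
        ∪ (univ.filter (fun p : F × F => p.1 ≠ 0 ∧ condI p ∧ condIII p)) := by
      ext ⟨a, b⟩
      rw [hW2, mem_filter, Finset.mem_union, mem_filter, mem_filter]
      simp only [mem_univ, true_and]
      constructor
      · rintro ⟨ha, hd⟩
        have hb : b ≠ 0 := by
          intro hb
          subst hb
          rw [hddk a ha] at hd
          omega
        rcases (dd_sum_iff hm1 hc ha hb).2.mp hd with h | h
        · exact Or.inl ⟨ha, h⟩
        · exact Or.inr ⟨ha, h⟩
      · intro h
        have hab : a ≠ 0 ∧ ((condI (a,b) ∧ condII (a,b)) ∨ (condI (a,b) ∧ condIII (a,b))) := by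
          rcases h with ⟨ha, h1, h2⟩ | ⟨ha, h1, h2⟩
          · exact ⟨ha, Or.inl ⟨h1, h2⟩⟩
          · exact ⟨ha, Or.inr ⟨h1, h2⟩⟩
        obtain ⟨ha, hor⟩ := hab
        have hb : b ≠ 0 := by
          rcases hor with ⟨-, u, hu1, hub, -⟩ | ⟨-, v, hv1, hvb, -⟩
          · have hu0 : u ≠ 0 := fun h => by rw [h, chi_zero'] at hu1; omega
            have : b = 2*u^2 := hub
            rw [this]
            exact mul_ne_zero (Ring.two_ne_zero hc) (pow_ne_zero 2 hu0)
          · have hv0 : v ≠ 0 := fun h => by rw [h, chi_zero'] at hv1; omega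
            have : b = -(2*v^2) := hvb
            rw [this]
            exact neg_ne_zero.mpr (mul_ne_zero (Ring.two_ne_zero hc) (pow_ne_zero 2 hv0))
        exact ⟨ha, (dd_sum_iff hm1 hc ha hb).2.mpr hor⟩
    have hdisj23 : Disjoint (univ.filter (fun p : F × F => p.1 ≠ 0 ∧ condI p ∧ condII p))
        (univ.filter (fun p : F × F => p.1 ≠ 0 ∧ condI p ∧ condIII p)) := by
      rw [Finset.disjoint_left]
      intro p h1 h2
      rw [mem_filter] at h1 h2
      exact condII_III_false hm1 hc p h1.2.2.2 h2.2.2.2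
    rw [hsplit2, Finset.card_union_of_disjoint hdisj23,
      ← p2_card hm1 hc, ← p3_card hm1 hc, Finset.card_product]
  -- integer facts
  have f5 : 2 * (Qc : ℤ) = (q : ℤ) - 1 := by
    have := two_sq_card (F := F) hc
    rw [← hQc, ← hqdef] at this
    exact this
  have f6 : 8 * (Tc : ℤ) = (q : ℤ) + 1 + (quadraticChar F 2 - 1) * T := by
    have := tset_card (F := F) hc hm1
    rw [← hTc, ← hqdef, ← hT] at this
    linarith
  have hEz : (E.card : ℤ) = (q : ℤ) - 1 := by
    have : 1 ≤ q := by omega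
    omega
  -- conclusion
  refine ⟨?_, ?_, ?_, ?_⟩
  · rw [hωcard, hWkcard]
    omega
  · rw [hωcard 2, ← hW2]
    have f4z : (W2.card : ℤ) = (Qc : ℤ) * Tc + (Qc : ℤ) * Tc := by exact_mod_cast f4
    linear_combination 4 * f4z * 2 + 8 * (Tc : ℤ) * f5 + ((q:ℤ) - 1) * f6 - 8 * f4z + 8 * f4z
  · rw [hωcard 1, ← hW1]
    have f4z : (W2.card : ℤ) = (Qc : ℤ) * Tc + (Qc : ℤ) * Tc := by exact_mod_cast f4
    have f1z : (E.card : ℤ) * k + (∑ p ∈ E ×ˢ E, (dd p : ℤ)) = (E.card : ℤ) * q := by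
      exact_mod_cast f1
    have f2z : (∑ p ∈ E ×ˢ E, (dd p : ℤ)) = (W1.card : ℤ) + 2 * W2.card := by
      exact_mod_cast f2
    have hkz : 4 * (k : ℤ) = (q : ℤ) + 1 := by exact_mod_cast hk
    have G2 : 8 * (W2.card : ℤ) = ((q:ℤ) - 1) * ((q:ℤ) + 1 + (quadraticChar F 2 - 1) * T) := by
      linear_combination 8 * f4z + 8 * (Tc : ℤ) * f5 + ((q:ℤ) - 1) * f6
    linear_combination 4 * f1z - 4 * f2z - G2 - (E.card : ℤ) * hkz + (3*(q:ℤ) - 1 + 4*(k:ℤ) - 4*(k:ℤ)) * hEz + (4*(k:ℤ) - (q:ℤ) - 1) * hEz - (4*(k:ℤ) - (q:ℤ) - 1) * hEz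
  · rw [hωcard 0, ← hW0]
    have f4z : (W2.card : ℤ) = (Qc : ℤ) * Tc + (Qc : ℤ) * Tc := by exact_mod_cast f4
    have f1z : (E.card : ℤ) * k + (∑ p ∈ E ×ˢ E, (dd p : ℤ)) = (E.card : ℤ) * q := by
      exact_mod_cast f1
    have f2z : (∑ p ∈ E ×ˢ E, (dd p : ℤ)) = (W1.card : ℤ) + 2 * W2.card := by
      exact_mod_cast f2
    have f3z : (W0.card : ℤ) + W1.card + W2.card = (E.card : ℤ) * E.card := by
      exact_mod_cast f3
    have hkz : 4 * (k : ℤ) = (q : ℤ) + 1 := by exact_mod_cast hk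
    have G2 : 8 * (W2.card : ℤ) = ((q:ℤ) - 1) * ((q:ℤ) + 1 + (quadraticChar F 2 - 1) * T) := by
      linear_combination 8 * f4z + 8 * (Tc : ℤ) * f5 + ((q:ℤ) - 1) * f6
    have G3 : 4 * (W1.card : ℤ) = ((q:ℤ) - 1) * (2*(q:ℤ) - 2 + (1 - quadraticChar F 2) * T) := by
      linear_combination 4 * f1z - 4 * f2z - G2 - (E.card : ℤ) * hkz + (3*(q:ℤ) - 1) * hEz
    linear_combination 8 * f3z - 2 * G3 - G2 + (8 * ((E.card : ℤ) + (q:ℤ) - 1)) * hEz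
end
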